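/- arXiv:math/0109037 — 7 statements merged into one kernel-verified Lean document; each statement's English description precedes it below -/
import Mathlib

section
/- Suppose F : U × (ℝⁿ \ {0}) → ℝ is a smooth positively 1-homogeneous (in y) function on an open set U ⊆ ℝⁿ satisfying F_{xⁱ} = F F_{yⁱ} for all i. Define Gⁱ(x,y) := F(x,y) yⁱ. Then the Riemann curvature tensor Rⁱₖ := 2 ∂Gⁱ/∂xᵏ − yʲ ∂²Gⁱ/∂xʲ∂yᵏ + 2 Gʲ ∂²Gⁱ/∂yʲ∂yᵏ − (∂Gⁱ/∂yʲ)(∂Gʲ/∂yᵏ) vanishes identically (summation over repeated indices). -/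
/-- Partial derivative in the `i`-th `x`-coordinate. -/
noncomputable def pdx {n : ℕ} (F : (Fin n → ℝ) → (Fin n → ℝ) → ℝ) (i : Fin n) :
    (Fin n → ℝ) → (Fin n → ℝ) → ℝ :=
  fun x y => fderiv ℝ (fun x' => F x' y) x (Pi.single i 1)

/-- Partial derivative in the `i`-th `y`-coordinate. -/
noncomputable def pdy {n : ℕ} (F : (Fin n → ℝ) → (Fin n → ℝ) → ℝ) (i : Fin n) :
    (Fin n → ℝ) → (Fin n → ℝ) → ℝ :=
  fun x y => fderiv ℝ (fun y' => F x y') y (Pi.single i 1)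

open ContinuousLinearMap

variable {n : ℕ}

lemma sliceY {F : (Fin n → ℝ) → (Fin n → ℝ) → ℝ} {x y : Fin n → ℝ}
    (h : DifferentiableAt ℝ (fun p : (Fin n → ℝ) × (Fin n → ℝ) => F p.1 p.2) (x, y)) :
    HasFDerivAt (fun y' => F x y')
      ((fderiv ℝ (fun p : (Fin n → ℝ) × (Fin n → ℝ) => F p.1 p.2) (x, y)).comp
        (inr ℝ (Fin n → ℝ) (Fin n → ℝ))) y :=
  h.hasFDerivAt.comp y (hasFDerivAt_prodMk_right x y)

lemma sliceX {F : (Fin n → ℝ) → (Fin n → ℝ) → ℝ} {x y : Fin n → ℝ}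
    (h : DifferentiableAt ℝ (fun p : (Fin n → ℝ) × (Fin n → ℝ) => F p.1 p.2) (x, y)) :
    HasFDerivAt (fun x' => F x' y)
      ((fderiv ℝ (fun p : (Fin n → ℝ) × (Fin n → ℝ) => F p.1 p.2) (x, y)).comp
        (inl ℝ (Fin n → ℝ) (Fin n → ℝ))) x :=
  h.hasFDerivAt.comp x (f := fun x' : Fin n → ℝ => (x', y)) (hasFDerivAt_prodMk_left x y)

lemma pdy_eq {F : (Fin n → ℝ) → (Fin n → ℝ) → ℝ} {x y : Fin n → ℝ}
    (h : DifferentiableAt ℝ (fun p : (Fin n → ℝ) × (Fin n → ℝ) => F p.1 p.2) (x, y)) (m : Fin n) :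
    pdy F m x y = fderiv ℝ (fun p : (Fin n → ℝ) × (Fin n → ℝ) => F p.1 p.2) (x, y)
      (0, Pi.single m 1) := by
  have := (sliceY h).fderiv
  simp only [pdy, this, coe_comp', Function.comp_apply, inr_apply]

lemma pdx_eq {F : (Fin n → ℝ) → (Fin n → ℝ) → ℝ} {x y : Fin n → ℝ}
    (h : DifferentiableAt ℝ (fun p : (Fin n → ℝ) × (Fin n → ℝ) => F p.1 p.2) (x, y)) (m : Fin n) :
    pdx F m x y = fderiv ℝ (fun p : (Fin n → ℝ) × (Fin n → ℝ) => F p.1 p.2) (x, y)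
      (Pi.single m 1, 0) := by
  have := (sliceX h).fderiv
  simp only [pdx, this, coe_comp', Function.comp_apply, inl_apply]

/-- product rule for `y' ↦ F x y' * y' i`. -/
lemma pdyMul {F : (Fin n → ℝ) → (Fin n → ℝ) → ℝ} {x y : Fin n → ℝ}
    (h : DifferentiableAt ℝ (fun p : (Fin n → ℝ) × (Fin n → ℝ) => F p.1 p.2) (x, y))
    (i m : Fin n) :
    fderiv ℝ (fun y' => F x y' * y' i) y (Pi.single m 1)
      = y i * fderiv ℝ (fun p : (Fin n → ℝ) × (Fin n → ℝ) => F p.1 p.2) (x, y) (0, Pi.single m 1)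
        + F x y * (Pi.single m 1 : Fin n → ℝ) i := by
  have hp := hasFDerivAt_apply (𝕜 := ℝ) (F' := fun _ : Fin n => ℝ) i y
  have := ((sliceY h).mul hp).fderiv
  erw [this]
  simp [mul_comm, add_comm]

lemma pdxMul {F : (Fin n → ℝ) → (Fin n → ℝ) → ℝ} {x y : Fin n → ℝ}
    (h : DifferentiableAt ℝ (fun p : (Fin n → ℝ) × (Fin n → ℝ) => F p.1 p.2) (x, y))
    (i m : Fin n) :
    fderiv ℝ (fun x' => F x' y * y i) x (Pi.single m 1)
      = y i * fderiv ℝ (fun p : (Fin n → ℝ) × (Fin n → ℝ) => F p.1 p.2) (x, y)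
          (Pi.single m 1, 0) := by
  have := ((sliceX h).mul_const (y i)).fderiv
  rw [this]
  simp [mul_comm]

set_option maxHeartbeats 1000000 in
/-- The spray `Gⁱ = F yⁱ` induced by a solution `F` of the Funk equations is R-flat:
its Riemann curvature `Rⁱₖ` vanishes. -/
theorem funk_spray_R_flat {n : ℕ} (U : Set (Fin n → ℝ)) (hU : IsOpen U)
    (F : (Fin n → ℝ) → (Fin n → ℝ) → ℝ)
    (hsm : ContDiffOn ℝ (⊤ : ℕ∞) (fun p : (Fin n → ℝ) × (Fin n → ℝ) => F p.1 p.2)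
      (U ×ˢ {y : Fin n → ℝ | y ≠ 0}))
    (hhom : ∀ x, ∀ y : Fin n → ℝ, ∀ l : ℝ, 0 < l → F x (l • y) = l * F x y)
    (hfunk : ∀ x ∈ U, ∀ y : Fin n → ℝ, y ≠ 0 → ∀ i,
      pdx F i x y = F x y * pdy F i x y)
    (G : Fin n → (Fin n → ℝ) → (Fin n → ℝ) → ℝ)
    (hG : ∀ i x y, G i x y = F x y * y i) :
    ∀ x ∈ U, ∀ y : Fin n → ℝ, y ≠ 0 → ∀ i k : Fin n,
      2 * pdx (G i) k x y
        - (∑ j, y j * pdx (pdy (G i) k) j x y)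
        + 2 * (∑ j, G j x y * pdy (pdy (G i) k) j x y)
        - (∑ j, pdy (G i) j x y * pdy (G j) k x y) = 0 := by
  intro x hx y hy i k
  have hV : IsOpen {y : Fin n → ℝ | y ≠ 0} := isOpen_ne
  have hS : IsOpen (U ×ˢ {y : Fin n → ℝ | y ≠ 0}) := hU.prod hV
  have hC : ∀ x' ∈ U, ∀ y' : Fin n → ℝ, y' ≠ 0 →
      ContDiffAt ℝ (⊤ : ℕ∞) (fun q : (Fin n → ℝ) × (Fin n → ℝ) => F q.1 q.2) (x', y') :=
    fun x' hx' y' hy' => hsm.contDiffAt (hS.mem_nhds ⟨hx', hy'⟩)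
  have hd : ∀ x' ∈ U, ∀ y' : Fin n → ℝ, y' ≠ 0 →
      DifferentiableAt ℝ (fun q : (Fin n → ℝ) × (Fin n → ℝ) => F q.1 q.2) (x', y') :=
    fun x' hx' y' hy' => (hC x' hx' y' hy').differentiableAt (by simp)
  have hAfd : DifferentiableAt ℝ (fderiv ℝ (fun q : (Fin n → ℝ) × (Fin n → ℝ) => F q.1 q.2)) (x, y) :=
    ((hC x hx y hy).fderiv_right (m := (⊤ : ℕ∞)) (by simp)).differentiableAt (by simp)
  have hsym : ∀ v w, (fderiv ℝ (fderiv ℝ (fun q : (Fin n → ℝ) × (Fin n → ℝ) => F q.1 q.2)) (x, y)) v w = (fderiv ℝ (fderiv ℝ (fun q : (Fin n → ℝ) × (Fin n → ℝ) => F q.1 q.2)) (x, y)) w v :=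
    (hC x hx y hy).isSymmSndFDerivAt (by simp; exact WithTop.coe_le_coe.mpr (le_top : (2 : ℕ∞) ≤ ⊤))
  have hpdyF : ∀ x' ∈ U, ∀ y' : Fin n → ℝ, y' ≠ 0 → ∀ m : Fin n,
      pdy F m x' y' = fderiv ℝ (fun q : (Fin n → ℝ) × (Fin n → ℝ) => F q.1 q.2) (x', y') (0, Pi.single m 1) :=
    fun x' hx' y' hy' m => pdy_eq (hd x' hx' y' hy') m
  have hpdxF : ∀ x' ∈ U, ∀ y' : Fin n → ℝ, y' ≠ 0 → ∀ m : Fin n,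
      pdx F m x' y' = fderiv ℝ (fun q : (Fin n → ℝ) × (Fin n → ℝ) => F q.1 q.2) (x', y') (Pi.single m 1, 0) :=
    fun x' hx' y' hy' m => pdx_eq (hd x' hx' y' hy') m
  -- Euler identity on S
  have hEulerS : ∀ x' ∈ U, ∀ y' : Fin n → ℝ, y' ≠ 0 →
      fderiv ℝ (fun q : (Fin n → ℝ) × (Fin n → ℝ) => F q.1 q.2) (x', y') (0, y') = F x' y' := by
    intro x' hx' y' hy'
    have h1 : HasDerivAt (fun l : ℝ => l • y') y' 1 := by
      simpa using (hasDerivAt_id (1 : ℝ)).smul_const y'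
    have h2 : HasDerivAt (fun l : ℝ => ((x', l • y') : (Fin n → ℝ) × (Fin n → ℝ)))
        (0, y') 1 := (hasDerivAt_const 1 x').prodMk h1
    have h4 : HasFDerivAt (fun q : (Fin n → ℝ) × (Fin n → ℝ) => F q.1 q.2) (fderiv ℝ (fun q : (Fin n → ℝ) × (Fin n → ℝ) => F q.1 q.2) (x', y'))
        ((fun l : ℝ => ((x', l • y') : (Fin n → ℝ) × (Fin n → ℝ))) 1) := by
      simpa using (hd x' hx' y' hy').hasFDerivAt
    have h3 : HasDerivAt (fun l : ℝ => F x' (l • y'))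
        (fderiv ℝ (fun q : (Fin n → ℝ) × (Fin n → ℝ) => F q.1 q.2) (x', y') (0, y')) 1 := by have := h4.comp_hasDerivAt 1 h2; exact this
    have h6 : HasDerivAt (fun l : ℝ => l * F x' y') (F x' y') 1 := by
      simpa using (hasDerivAt_id (1 : ℝ)).mul_const (F x' y')
    have h5 : HasDerivAt (fun l : ℝ => F x' (l • y')) (F x' y') 1 := by
      apply h6.congr_of_eventuallyEq
      filter_upwards [isOpen_Ioi.mem_nhds (show (0 : ℝ) < 1 by norm_num)] with l hl
      exact hhom x' y' l hl
    exact h3.unique h5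
  -- the map p ↦ fderiv Φ p u
  have hApp : ∀ u : (Fin n → ℝ) × (Fin n → ℝ),
      HasFDerivAt (fun p : (Fin n → ℝ) × (Fin n → ℝ) => fderiv ℝ (fun q : (Fin n → ℝ) × (Fin n → ℝ) => F q.1 q.2) p u)
        ((ContinuousLinearMap.apply ℝ ℝ u).comp (fderiv ℝ (fderiv ℝ (fun q : (Fin n → ℝ) × (Fin n → ℝ) => F q.1 q.2)) (x, y))) (x, y) :=
    fun u => (ContinuousLinearMap.apply ℝ ℝ u).hasFDerivAt.comp (x, y) hAfd.hasFDerivAt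
  -- differentiated Euler identity: B (0, eₘ) (0, y) = 0
  have hEulerD : ∀ m : Fin n, (fderiv ℝ (fderiv ℝ (fun q : (Fin n → ℝ) × (Fin n → ℝ) => F q.1 q.2)) (x, y)) (0, Pi.single m 1) (0, y) = 0 := by
    have hbil := isBoundedBilinearMap_apply (𝕜 := ℝ)
      (E := (Fin n → ℝ) × (Fin n → ℝ)) (F := ℝ)
    have hinner : HasFDerivAt (fun p : (Fin n → ℝ) × (Fin n → ℝ) =>
        (fderiv ℝ (fun q : (Fin n → ℝ) × (Fin n → ℝ) => F q.1 q.2) p, ((0 : Fin n → ℝ), p.2)))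
        ((fderiv ℝ (fderiv ℝ (fun q : (Fin n → ℝ) × (Fin n → ℝ) => F q.1 q.2)) (x, y)).prod ((0 : ((Fin n → ℝ) × (Fin n → ℝ)) →L[ℝ] (Fin n → ℝ)).prod
          (ContinuousLinearMap.snd ℝ (Fin n → ℝ) (Fin n → ℝ)))) (x, y) :=
      hAfd.hasFDerivAt.prodMk ((hasFDerivAt_const _ _).prodMk hasFDerivAt_snd)
    have hχ : HasFDerivAt (fun p : (Fin n → ℝ) × (Fin n → ℝ) =>
        fderiv ℝ (fun q : (Fin n → ℝ) × (Fin n → ℝ) => F q.1 q.2) p (0, p.2))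
        ((hbil.deriv (fderiv ℝ (fun q : (Fin n → ℝ) × (Fin n → ℝ) => F q.1 q.2) (x, y), ((0 : Fin n → ℝ), y))).comp
          ((fderiv ℝ (fderiv ℝ (fun q : (Fin n → ℝ) × (Fin n → ℝ) => F q.1 q.2)) (x, y)).prod ((0 : ((Fin n → ℝ) × (Fin n → ℝ)) →L[ℝ] (Fin n → ℝ)).prod
            (ContinuousLinearMap.snd ℝ (Fin n → ℝ) (Fin n → ℝ))))) (x, y) :=
      by have := (hbil.hasFDerivAt (fderiv ℝ (fun q : (Fin n → ℝ) × (Fin n → ℝ) => F q.1 q.2) (x, y), ((0 : Fin n → ℝ), y))).comp (x, y) hinner; exact this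
    have heq : (fun p : (Fin n → ℝ) × (Fin n → ℝ) =>
        fderiv ℝ (fun q : (Fin n → ℝ) × (Fin n → ℝ) => F q.1 q.2) p (0, p.2)) =ᶠ[nhds (x, y)] (fun p => F p.1 p.2) := by
      filter_upwards [hS.mem_nhds ⟨hx, hy⟩] with p hp
      exact hEulerS p.1 hp.1 p.2 hp.2
    intro m
    have h9 := DFunLike.congr_fun ((hχ.fderiv.symm.trans heq.fderiv_eq))
      (((0 : Fin n → ℝ), Pi.single m 1))
    simp only [ContinuousLinearMap.coe_comp', Function.comp_apply,
      ContinuousLinearMap.prod_apply, IsBoundedBilinearMap.deriv_apply,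
      ContinuousLinearMap.zero_apply, ContinuousLinearMap.coe_snd'] at h9
    linarith [h9]
  -- differentiated Funk identity
  have hFunkD : ∀ j m : Fin n, (fderiv ℝ (fderiv ℝ (fun q : (Fin n → ℝ) × (Fin n → ℝ) => F q.1 q.2)) (x, y)) (0, Pi.single m 1) (Pi.single j 1, 0)
      = F x y * (fderiv ℝ (fderiv ℝ (fun q : (Fin n → ℝ) × (Fin n → ℝ) => F q.1 q.2)) (x, y)) (0, Pi.single m 1) (0, Pi.single j 1)
        + (fderiv ℝ (fun q : (Fin n → ℝ) × (Fin n → ℝ) => F q.1 q.2) (x, y)) (0, Pi.single j 1) * (fderiv ℝ (fun q : (Fin n → ℝ) × (Fin n → ℝ) => F q.1 q.2) (x, y)) (0, Pi.single m 1) := by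
    intro j m
    have hR : HasFDerivAt (fun p : (Fin n → ℝ) × (Fin n → ℝ) =>
        F p.1 p.2 * fderiv ℝ (fun q : (Fin n → ℝ) × (Fin n → ℝ) => F q.1 q.2) p (0, Pi.single j 1))
        (F x y • ((ContinuousLinearMap.apply ℝ ℝ ((0 : Fin n → ℝ), Pi.single j 1)).comp
            (fderiv ℝ (fderiv ℝ (fun q : (Fin n → ℝ) × (Fin n → ℝ) => F q.1 q.2)) (x, y)))
          + ((fderiv ℝ (fun q : (Fin n → ℝ) × (Fin n → ℝ) => F q.1 q.2) (x, y)) (0, Pi.single j 1)) • (fderiv ℝ (fun q : (Fin n → ℝ) × (Fin n → ℝ) => F q.1 q.2) (x, y))) (x, y) :=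
      (hd x hx y hy).hasFDerivAt.mul (hApp (0, Pi.single j 1))
    have heq : (fun p : (Fin n → ℝ) × (Fin n → ℝ) =>
        fderiv ℝ (fun q : (Fin n → ℝ) × (Fin n → ℝ) => F q.1 q.2) p (Pi.single j 1, 0)) =ᶠ[nhds (x, y)]
        (fun p => F p.1 p.2 * fderiv ℝ (fun q : (Fin n → ℝ) × (Fin n → ℝ) => F q.1 q.2) p (0, Pi.single j 1)) := by
      filter_upwards [hS.mem_nhds ⟨hx, hy⟩] with p hp
      have h := hfunk p.1 hp.1 p.2 hp.2 j
      rwa [hpdxF p.1 hp.1 p.2 hp.2 j, hpdyF p.1 hp.1 p.2 hp.2 j] at h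
    have h10 := DFunLike.congr_fun
      (((hApp (Pi.single j 1, 0)).fderiv.symm.trans (heq.fderiv_eq.trans hR.fderiv)))
      (((0 : Fin n → ℝ), Pi.single m 1))
    simpa using h10
  -- Funk at the point
  have hfp : ∀ j : Fin n, (fderiv ℝ (fun q : (Fin n → ℝ) × (Fin n → ℝ) => F q.1 q.2) (x, y)) (Pi.single j 1, 0) = F x y * (fderiv ℝ (fun q : (Fin n → ℝ) × (Fin n → ℝ) => F q.1 q.2) (x, y)) (0, Pi.single j 1) := by
    intro j
    have h := hfunk x hx y hy j
    rwa [hpdxF x hx y hy j, hpdyF x hx y hy j] at h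
  -- first derivatives of G
  have hT1 : pdx (G i) k x y = y i * (fderiv ℝ (fun q : (Fin n → ℝ) × (Fin n → ℝ) => F q.1 q.2) (x, y)) (Pi.single k 1, 0) := by
    have hfn : (fun x' => G i x' y) = fun x' => F x' y * y i := funext fun x' => hG i x' y
    show fderiv ℝ (fun x' => G i x' y) x (Pi.single k 1) = _
    rw [hfn]
    exact pdxMul (hd x hx y hy) i k
  have hT4 : ∀ i' m : Fin n, pdy (G i') m x y
      = y i' * (fderiv ℝ (fun q : (Fin n → ℝ) × (Fin n → ℝ) => F q.1 q.2) (x, y)) (0, Pi.single m 1) + F x y * (Pi.single m 1 : Fin n → ℝ) i' := by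
    intro i' m
    have hfn : (fun y' => G i' x y') = fun y' => F x y' * y' i' := funext fun y' => hG i' x y'
    show fderiv ℝ (fun y' => G i' x y') y (Pi.single m 1) = _
    rw [hfn]
    exact pdyMul (hd x hx y hy) i' m
  -- second derivative x-y of G
  have hT2 : ∀ j : Fin n, pdx (pdy (G i) k) j x y
      = y i * (fderiv ℝ (fderiv ℝ (fun q : (Fin n → ℝ) × (Fin n → ℝ) => F q.1 q.2)) (x, y)) (Pi.single j 1, 0) (0, Pi.single k 1)
        + (fderiv ℝ (fun q : (Fin n → ℝ) × (Fin n → ℝ) => F q.1 q.2) (x, y)) (Pi.single j 1, 0) * (Pi.single k 1 : Fin n → ℝ) i := by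
    intro j
    have heq : (fun x' => pdy (G i) k x' y) =ᶠ[nhds x]
        (fun x' => y i * fderiv ℝ (fun q : (Fin n → ℝ) × (Fin n → ℝ) => F q.1 q.2) (x', y) (0, Pi.single k 1)
          + F x' y * (Pi.single k 1 : Fin n → ℝ) i) := by
      filter_upwards [hU.mem_nhds hx] with x' hx'
      have hfn : (fun y' => G i x' y') = fun y' => F x' y' * y' i :=
        funext fun y' => hG i x' y'
      show fderiv ℝ (fun y' => G i x' y') y (Pi.single k 1) = _
      rw [hfn]
      exact pdyMul (hd x' hx' y hy) i k
    have hg1 : HasFDerivAt (fun x' => fderiv ℝ (fun q : (Fin n → ℝ) × (Fin n → ℝ) => F q.1 q.2) (x', y) (0, Pi.single k 1))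
        (((ContinuousLinearMap.apply ℝ ℝ ((0 : Fin n → ℝ), Pi.single k 1)).comp
          (fderiv ℝ (fderiv ℝ (fun q : (Fin n → ℝ) × (Fin n → ℝ) => F q.1 q.2)) (x, y))).comp (inl ℝ (Fin n → ℝ) (Fin n → ℝ))) x :=
      (hApp (0, Pi.single k 1)).comp x (f := fun x' : Fin n → ℝ => (x', y)) (hasFDerivAt_prodMk_left x y)
    have hg2 : HasFDerivAt (fun x' => F x' y) ((fderiv ℝ (fun q : (Fin n → ℝ) × (Fin n → ℝ) => F q.1 q.2) (x, y)).comp (inl ℝ (Fin n → ℝ) (Fin n → ℝ))) x :=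
      sliceX (hd x hx y hy)
    have hsum : HasFDerivAt (fun x' => y i * fderiv ℝ (fun q : (Fin n → ℝ) × (Fin n → ℝ) => F q.1 q.2) (x', y) (0, Pi.single k 1)
          + F x' y * (Pi.single k 1 : Fin n → ℝ) i)
        (y i • (((ContinuousLinearMap.apply ℝ ℝ ((0 : Fin n → ℝ), Pi.single k 1)).comp
          (fderiv ℝ (fderiv ℝ (fun q : (Fin n → ℝ) × (Fin n → ℝ) => F q.1 q.2)) (x, y))).comp (inl ℝ (Fin n → ℝ) (Fin n → ℝ)))
          + ((Pi.single k 1 : Fin n → ℝ) i) • ((fderiv ℝ (fun q : (Fin n → ℝ) × (Fin n → ℝ) => F q.1 q.2) (x, y)).comp (inl ℝ (Fin n → ℝ) (Fin n → ℝ)))) x :=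
      (hg1.const_mul (y i)).add (hg2.mul_const _)
    show fderiv ℝ (fun x' => pdy (G i) k x' y) x (Pi.single j 1) = _
    rw [heq.fderiv_eq, hsum.fderiv]
    simp
    ring
  -- second derivative y-y of G
  have hT3 : ∀ j : Fin n, pdy (pdy (G i) k) j x y
      = (Pi.single j 1 : Fin n → ℝ) i * (fderiv ℝ (fun q : (Fin n → ℝ) × (Fin n → ℝ) => F q.1 q.2) (x, y)) (0, Pi.single k 1)
        + y i * (fderiv ℝ (fderiv ℝ (fun q : (Fin n → ℝ) × (Fin n → ℝ) => F q.1 q.2)) (x, y)) (0, Pi.single j 1) (0, Pi.single k 1)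
        + (fderiv ℝ (fun q : (Fin n → ℝ) × (Fin n → ℝ) => F q.1 q.2) (x, y)) (0, Pi.single j 1) * (Pi.single k 1 : Fin n → ℝ) i := by
    intro j
    have heq : (fun y' => pdy (G i) k x y') =ᶠ[nhds y]
        (fun y' => y' i * fderiv ℝ (fun q : (Fin n → ℝ) × (Fin n → ℝ) => F q.1 q.2) (x, y') (0, Pi.single k 1)
          + F x y' * (Pi.single k 1 : Fin n → ℝ) i) := by
      filter_upwards [hV.mem_nhds hy] with y' hy'
      have hfn : (fun y'' => G i x y'') = fun y'' => F x y'' * y'' i :=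
        funext fun y'' => hG i x y''
      show fderiv ℝ (fun y'' => G i x y'') y' (Pi.single k 1) = _
      rw [hfn]
      exact pdyMul (hd x hx y' hy') i k
    have hg1 : HasFDerivAt (fun y' => fderiv ℝ (fun q : (Fin n → ℝ) × (Fin n → ℝ) => F q.1 q.2) (x, y') (0, Pi.single k 1))
        (((ContinuousLinearMap.apply ℝ ℝ ((0 : Fin n → ℝ), Pi.single k 1)).comp
          (fderiv ℝ (fderiv ℝ (fun q : (Fin n → ℝ) × (Fin n → ℝ) => F q.1 q.2)) (x, y))).comp (inr ℝ (Fin n → ℝ) (Fin n → ℝ))) y :=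
      (hApp (0, Pi.single k 1)).comp y (hasFDerivAt_prodMk_right x y)
    have hp := hasFDerivAt_apply (𝕜 := ℝ) (F' := fun _ : Fin n => ℝ) i y
    have hg2 : HasFDerivAt (fun y' => F x y') ((fderiv ℝ (fun q : (Fin n → ℝ) × (Fin n → ℝ) => F q.1 q.2) (x, y)).comp (inr ℝ (Fin n → ℝ) (Fin n → ℝ))) y :=
      sliceY (hd x hx y hy)
    have hsum : HasFDerivAt (fun y' => y' i * fderiv ℝ (fun q : (Fin n → ℝ) × (Fin n → ℝ) => F q.1 q.2) (x, y') (0, Pi.single k 1)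
          + F x y' * (Pi.single k 1 : Fin n → ℝ) i)
        (y i • ((((ContinuousLinearMap.apply ℝ ℝ ((0 : Fin n → ℝ), Pi.single k 1)).comp
            (fderiv ℝ (fderiv ℝ (fun q : (Fin n → ℝ) × (Fin n → ℝ) => F q.1 q.2)) (x, y))).comp (inr ℝ (Fin n → ℝ) (Fin n → ℝ))))
          + (fderiv ℝ (fun q : (Fin n → ℝ) × (Fin n → ℝ) => F q.1 q.2) (x, y) (0, Pi.single k 1)) •
            (ContinuousLinearMap.proj (R := ℝ) (φ := fun _ : Fin n => ℝ) i)
          + ((Pi.single k 1 : Fin n → ℝ) i) • ((fderiv ℝ (fun q : (Fin n → ℝ) × (Fin n → ℝ) => F q.1 q.2) (x, y)).comp (inr ℝ (Fin n → ℝ) (Fin n → ℝ)))) y := by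
      exact (hp.mul hg1).add (hg2.mul_const _)
    show fderiv ℝ (fun y' => pdy (G i) k x y') y (Pi.single j 1) = _
    rw [heq.fderiv_eq, hsum.fderiv]
    simp [Pi.single_apply, apply_ite (fun L : (Fin n → ℝ) →L[ℝ] ℝ => L (Pi.single j 1))]
    try ring
  -- decomposition of (0, y)
  have h1 : ∑ j, y j • (Pi.single j (1 : ℝ) : Fin n → ℝ) = y := by
    ext t
    simp [Pi.single_apply]
  have hdecomp : (((0 : Fin n → ℝ), y) : (Fin n → ℝ) × (Fin n → ℝ))
      = ∑ j, y j • (((0 : Fin n → ℝ), (Pi.single j 1 : Fin n → ℝ)) :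
          (Fin n → ℝ) × (Fin n → ℝ)) := by
    have h2 : ∀ j : Fin n, y j • (((0 : Fin n → ℝ), (Pi.single j 1 : Fin n → ℝ)) :
        (Fin n → ℝ) × (Fin n → ℝ)) = ((0 : Fin n → ℝ), y j • (Pi.single j 1 : Fin n → ℝ)) :=
      fun j => by simp
    rw [Finset.sum_congr rfl fun j _ => h2 j, ← prod_mk_sum]
    simp [h1]
  -- Euler sums
  have hyD : ∑ j, y j * (fderiv ℝ (fun q : (Fin n → ℝ) × (Fin n → ℝ) => F q.1 q.2) (x, y)) (0, Pi.single j 1) = F x y := by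
    calc ∑ j, y j * (fderiv ℝ (fun q : (Fin n → ℝ) × (Fin n → ℝ) => F q.1 q.2) (x, y)) (0, Pi.single j 1)
        = ∑ j, (fderiv ℝ (fun q : (Fin n → ℝ) × (Fin n → ℝ) => F q.1 q.2) (x, y)) (y j • (((0 : Fin n → ℝ), (Pi.single j 1 : Fin n → ℝ)) :
            (Fin n → ℝ) × (Fin n → ℝ))) := by
          refine Finset.sum_congr rfl fun j _ => ?_
          rw [map_smul, smul_eq_mul]
      _ = (fderiv ℝ (fun q : (Fin n → ℝ) × (Fin n → ℝ) => F q.1 q.2) (x, y)) (∑ j, y j • (((0 : Fin n → ℝ), (Pi.single j 1 : Fin n → ℝ)) :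
            (Fin n → ℝ) × (Fin n → ℝ))) := (map_sum _ _ _).symm
      _ = (fderiv ℝ (fun q : (Fin n → ℝ) × (Fin n → ℝ) => F q.1 q.2) (x, y)) (0, y) := by rw [← hdecomp]
      _ = F x y := hEulerS x hx y hy
  have hyB : ∑ j, y j * (fderiv ℝ (fderiv ℝ (fun q : (Fin n → ℝ) × (Fin n → ℝ) => F q.1 q.2)) (x, y)) (0, Pi.single j 1) (0, Pi.single k 1) = 0 := by
    calc ∑ j, y j * (fderiv ℝ (fderiv ℝ (fun q : (Fin n → ℝ) × (Fin n → ℝ) => F q.1 q.2)) (x, y)) (0, Pi.single j 1) (0, Pi.single k 1)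
        = ∑ j, ((ContinuousLinearMap.apply ℝ ℝ ((0 : Fin n → ℝ), Pi.single k 1)).comp
            (fderiv ℝ (fderiv ℝ (fun q : (Fin n → ℝ) × (Fin n → ℝ) => F q.1 q.2)) (x, y)))
            (y j • (((0 : Fin n → ℝ), (Pi.single j 1 : Fin n → ℝ)) :
              (Fin n → ℝ) × (Fin n → ℝ))) := by
          refine Finset.sum_congr rfl fun j _ => ?_
          simp only [ContinuousLinearMap.comp_apply, ContinuousLinearMap.apply_apply,
            map_smul, ContinuousLinearMap.smul_apply, smul_eq_mul]
      _ = ((ContinuousLinearMap.apply ℝ ℝ ((0 : Fin n → ℝ), Pi.single k 1)).comp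
            (fderiv ℝ (fderiv ℝ (fun q : (Fin n → ℝ) × (Fin n → ℝ) => F q.1 q.2)) (x, y)))
            (∑ j, y j • (((0 : Fin n → ℝ), (Pi.single j 1 : Fin n → ℝ)) :
              (Fin n → ℝ) × (Fin n → ℝ))) := (map_sum _ _ _).symm
      _ = (fderiv ℝ (fderiv ℝ (fun q : (Fin n → ℝ) × (Fin n → ℝ) => F q.1 q.2)) (x, y)) (0, y) (0, Pi.single k 1) := by
          rw [← hdecomp]
          simp only [ContinuousLinearMap.comp_apply, ContinuousLinearMap.apply_apply]
      _ = (fderiv ℝ (fderiv ℝ (fun q : (Fin n → ℝ) × (Fin n → ℝ) => F q.1 q.2)) (x, y)) (0, Pi.single k 1) (0, y) := hsym _ _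
      _ = 0 := hEulerD k
  -- Kronecker sums
  have hs1 : ∑ j, y j * (Pi.single j 1 : Fin n → ℝ) i = y i := by
    simp [Pi.single_apply]
  have hs2 : ∑ j, (fderiv ℝ (fun q : (Fin n → ℝ) × (Fin n → ℝ) => F q.1 q.2) (x, y)) (0, Pi.single j 1) * (Pi.single k 1 : Fin n → ℝ) j
      = (fderiv ℝ (fun q : (Fin n → ℝ) × (Fin n → ℝ) => F q.1 q.2) (x, y)) (0, Pi.single k 1) := by
    simp [Pi.single_apply]
  have hs3 : ∑ j, (Pi.single j 1 : Fin n → ℝ) i * (Pi.single k 1 : Fin n → ℝ) j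
      = (Pi.single k 1 : Fin n → ℝ) i := by
    simp [Pi.single_apply]
  -- the three sums in closed form
  have E1 : (∑ j, y j * pdx (pdy (G i) k) j x y)
      = y i * (fderiv ℝ (fun q : (Fin n → ℝ) × (Fin n → ℝ) => F q.1 q.2) (x, y)) (0, Pi.single k 1) * F x y
        + F x y * (Pi.single k 1 : Fin n → ℝ) i * F x y := by
    have hterm : ∀ j ∈ Finset.univ, y j * pdx (pdy (G i) k) j x y
        = (y i * F x y) * (y j * (fderiv ℝ (fderiv ℝ (fun q : (Fin n → ℝ) × (Fin n → ℝ) => F q.1 q.2)) (x, y)) (0, Pi.single j 1) (0, Pi.single k 1))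
          + (y i * (fderiv ℝ (fun q : (Fin n → ℝ) × (Fin n → ℝ) => F q.1 q.2) (x, y)) (0, Pi.single k 1)) * (y j * (fderiv ℝ (fun q : (Fin n → ℝ) × (Fin n → ℝ) => F q.1 q.2) (x, y)) (0, Pi.single j 1))
          + (F x y * (Pi.single k 1 : Fin n → ℝ) i) * (y j * (fderiv ℝ (fun q : (Fin n → ℝ) × (Fin n → ℝ) => F q.1 q.2) (x, y)) (0, Pi.single j 1)) := by
      intro j _
      rw [hT2 j, hsym (Pi.single j 1, 0) (0, Pi.single k 1), hFunkD j k,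
        hsym (0, Pi.single k 1) (0, Pi.single j 1), hfp j]
      ring
    rw [Finset.sum_congr rfl hterm, Finset.sum_add_distrib, Finset.sum_add_distrib,
      ← Finset.mul_sum, ← Finset.mul_sum, ← Finset.mul_sum, hyB, hyD]
    ring
  have E2 : (∑ j, G j x y * pdy (pdy (G i) k) j x y)
      = F x y * (fderiv ℝ (fun q : (Fin n → ℝ) × (Fin n → ℝ) => F q.1 q.2) (x, y)) (0, Pi.single k 1) * y i
        + F x y * F x y * (Pi.single k 1 : Fin n → ℝ) i := by
    have hterm : ∀ j ∈ Finset.univ, G j x y * pdy (pdy (G i) k) j x y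
        = (F x y * (fderiv ℝ (fun q : (Fin n → ℝ) × (Fin n → ℝ) => F q.1 q.2) (x, y)) (0, Pi.single k 1)) * (y j * (Pi.single j 1 : Fin n → ℝ) i)
          + (F x y * y i) * (y j * (fderiv ℝ (fderiv ℝ (fun q : (Fin n → ℝ) × (Fin n → ℝ) => F q.1 q.2)) (x, y)) (0, Pi.single j 1) (0, Pi.single k 1))
          + (F x y * (Pi.single k 1 : Fin n → ℝ) i) * (y j * (fderiv ℝ (fun q : (Fin n → ℝ) × (Fin n → ℝ) => F q.1 q.2) (x, y)) (0, Pi.single j 1)) := by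
      intro j _
      rw [hG j x y, hT3 j]
      ring
    rw [Finset.sum_congr rfl hterm, Finset.sum_add_distrib, Finset.sum_add_distrib,
      ← Finset.mul_sum, ← Finset.mul_sum, ← Finset.mul_sum, hyB, hyD, hs1]
    ring
  have E3 : (∑ j, pdy (G i) j x y * pdy (G j) k x y)
      = 3 * (y i * (fderiv ℝ (fun q : (Fin n → ℝ) × (Fin n → ℝ) => F q.1 q.2) (x, y)) (0, Pi.single k 1) * F x y)
        + F x y * F x y * (Pi.single k 1 : Fin n → ℝ) i := by
    have hterm : ∀ j ∈ Finset.univ, pdy (G i) j x y * pdy (G j) k x y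
        = (y i * (fderiv ℝ (fun q : (Fin n → ℝ) × (Fin n → ℝ) => F q.1 q.2) (x, y)) (0, Pi.single k 1)) * (y j * (fderiv ℝ (fun q : (Fin n → ℝ) × (Fin n → ℝ) => F q.1 q.2) (x, y)) (0, Pi.single j 1))
          + (y i * F x y) * ((fderiv ℝ (fun q : (Fin n → ℝ) × (Fin n → ℝ) => F q.1 q.2) (x, y)) (0, Pi.single j 1) * (Pi.single k 1 : Fin n → ℝ) j)
          + (F x y * (fderiv ℝ (fun q : (Fin n → ℝ) × (Fin n → ℝ) => F q.1 q.2) (x, y)) (0, Pi.single k 1)) * (y j * (Pi.single j 1 : Fin n → ℝ) i)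
          + (F x y * F x y) * ((Pi.single j 1 : Fin n → ℝ) i * (Pi.single k 1 : Fin n → ℝ) j) := by
      intro j _
      rw [hT4 i j, hT4 j k]
      ring
    rw [Finset.sum_congr rfl hterm, Finset.sum_add_distrib, Finset.sum_add_distrib,
      Finset.sum_add_distrib, ← Finset.mul_sum, ← Finset.mul_sum, ← Finset.mul_sum,
      ← Finset.mul_sum, hyD, hs1, hs2, hs3]
    ring
  rw [hT1, hfp k, E1, E2, E3]
  ring
end

section
/- Let F satisfy the Funk equations F_{xⁱ} = F F_{yⁱ}. Then for every m ≥ 1 and indices i₁,…,iₘ, the m-th order x-derivatives satisfy F_{x^{i₁}⋯x^{iₘ}} = (1/(m+1)) (F^{m+1})_{y^{i₁}⋯y^{iₘ}}. -/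
/-- Iterated partial derivatives in the `x`-coordinates along a list of indices. -/
noncomputable def pdxs {n : ℕ} (F : (Fin n → ℝ) → (Fin n → ℝ) → ℝ) :
    List (Fin n) → (Fin n → ℝ) → (Fin n → ℝ) → ℝ
  | [] => F
  | i :: l => pdx (pdxs F l) i

/-- Iterated partial derivatives in the `y`-coordinates along a list of indices. -/
noncomputable def pdys {n : ℕ} (F : (Fin n → ℝ) → (Fin n → ℝ) → ℝ) :
    List (Fin n) → (Fin n → ℝ) → (Fin n → ℝ) → ℝ
  | [] => F
  | i :: l => pdy (pdys F l) i


open ContDiff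

section Dir

variable {E : Type*} [NormedAddCommGroup E] [NormedSpace ℝ E]

/-- Directional derivative of a real-valued function along `v`. -/
noncomputable def dirD (v : E) (H : E → ℝ) : E → ℝ := fun p => fderiv ℝ H p v

/-- Iterated directional derivatives along a list of vectors. -/
noncomputable def dirDs : List E → (E → ℝ) → E → ℝ
  | [], H => H
  | v :: l, H => dirD v (dirDs l H)

variable {s : Set E}

theorem smooth_dirD (hs : IsOpen s) {H : E → ℝ} (hH : ContDiffOn ℝ ∞ H s) (v : E) :
    ContDiffOn ℝ ∞ (dirD v H) s := by
  have h1 : ContDiffOn ℝ ∞ (fderiv ℝ H) s :=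
    ((contDiffOn_infty_iff_fderiv_of_isOpen hs).1 hH).2
  exact h1.clm_apply contDiffOn_const

theorem diffAt_of_smoothOn (hs : IsOpen s) {H : E → ℝ} (hH : ContDiffOn ℝ ∞ H s) {p : E}
    (hp : p ∈ s) : DifferentiableAt ℝ H p :=
  ((hH p hp).contDiffAt (hs.mem_nhds hp)).differentiableAt (by simp)

theorem dirD_congr (hs : IsOpen s) {H₁ H₂ : E → ℝ} (h : ∀ q ∈ s, H₁ q = H₂ q) (v : E) {p : E}
    (hp : p ∈ s) : dirD v H₁ p = dirD v H₂ p := by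
  have : H₁ =ᶠ[nhds p] H₂ := by
    filter_upwards [hs.mem_nhds hp] with q hq using h q hq
  simp only [dirD, this.fderiv_eq]

theorem dirD_swap (hs : IsOpen s) {H : E → ℝ} (hH : ContDiffOn ℝ ∞ H s) (u v : E) {p : E}
    (hp : p ∈ s) : dirD u (dirD v H) p = dirD v (dirD u H) p := by
  have hsymm : IsSymmSndFDerivAt ℝ H p :=
    ((hH p hp).contDiffAt (hs.mem_nhds hp)).isSymmSndFDerivAt
      (by rw [minSmoothness_of_isRCLikeNormedField]; exact WithTop.coe_le_coe.2 (le_top : (2:ℕ∞) ≤ ⊤))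
  have h1 : ContDiffOn ℝ ∞ (fderiv ℝ H) s :=
    ((contDiffOn_infty_iff_fderiv_of_isOpen hs).1 hH).2
  have hd : DifferentiableAt ℝ (fderiv ℝ H) p :=
    ((h1 p hp).contDiffAt (hs.mem_nhds hp)).differentiableAt (by simp)
  have key : ∀ w z : E, dirD w (dirD z H) p = fderiv ℝ (fderiv ℝ H) p w z := by
    intro w z
    have hcomp : HasFDerivAt (fun q => fderiv ℝ H q z)
        ((ContinuousLinearMap.apply ℝ ℝ z).comp (fderiv ℝ (fderiv ℝ H) p)) p :=
      ((ContinuousLinearMap.apply ℝ ℝ z).hasFDerivAt).comp p hd.hasFDerivAt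
    show fderiv ℝ (fun q => fderiv ℝ H q z) p w = _
    rw [hcomp.fderiv]
    rfl
  rw [key u v, key v u, hsymm u v]

theorem dirD_const_mul {H : E → ℝ} {p : E} (hH : DifferentiableAt ℝ H p) (c : ℝ) (v : E) :
    dirD v (fun q => c * H q) p = c * dirD v H p := by
  simp only [dirD, fderiv_const_mul hH c, ContinuousLinearMap.smul_apply, smul_eq_mul]

theorem dirD_pow {H : E → ℝ} {p : E} (hH : DifferentiableAt ℝ H p) (k : ℕ) (v : E) :
    dirD v (fun q => H q ^ k) p = k * H p ^ (k - 1) * dirD v H p := by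
  have h := (hasDerivAt_pow k (H p)).comp_hasFDerivAt p hH.hasFDerivAt
  show fderiv ℝ ((fun x => x ^ k) ∘ H) p v = _
  rw [h.fderiv]
  simp only [ContinuousLinearMap.smul_apply, smul_eq_mul]
  rfl

theorem smooth_dirDs (hs : IsOpen s) {H : E → ℝ} (hH : ContDiffOn ℝ ∞ H s) (l : List E) :
    ContDiffOn ℝ ∞ (dirDs l H) s := by
  induction l with
  | nil => exact hH
  | cons v l ih => exact smooth_dirD hs ih v

theorem dirDs_congr (hs : IsOpen s) {H₁ H₂ : E → ℝ} (h : ∀ q ∈ s, H₁ q = H₂ q) (l : List E) :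
    ∀ p ∈ s, dirDs l H₁ p = dirDs l H₂ p := by
  induction l with
  | nil => exact h
  | cons v l ih => exact fun p hp => dirD_congr hs ih v hp

theorem dirD_dirDs_comm (hs : IsOpen s) {H : E → ℝ} (hH : ContDiffOn ℝ ∞ H s) (u : E)
    (l : List E) : ∀ p ∈ s, dirD u (dirDs l H) p = dirDs l (dirD u H) p := by
  induction l with
  | nil => intro p _; rfl
  | cons v l ih =>
    intro p hp
    calc dirD u (dirD v (dirDs l H)) p = dirD v (dirD u (dirDs l H)) p :=
          dirD_swap hs (smooth_dirDs hs hH l) u v hp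
      _ = dirD v (dirDs l (dirD u H)) p := dirD_congr hs ih v hp

theorem dirDs_const_mul (hs : IsOpen s) {H : E → ℝ} (hH : ContDiffOn ℝ ∞ H s) (c : ℝ)
    (l : List E) : ∀ p ∈ s, dirDs l (fun q => c * H q) p = c * dirDs l H p := by
  induction l with
  | nil => intro p _; rfl
  | cons v l ih =>
    intro p hp
    calc dirD v (dirDs l fun q => c * H q) p
        = dirD v (fun q => c * dirDs l H q) p := dirD_congr hs ih v hp
      _ = c * dirD v (dirDs l H) p :=
          dirD_const_mul (diffAt_of_smoothOn hs (smooth_dirDs hs hH l) hp) c v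

/-- Main computation in the joint space. -/
theorem dirDs_funk (hs : IsOpen s) {G : E → ℝ} (hG : ContDiffOn ℝ ∞ G s) {ι : Type*}
    (a b : ι → E) (hfunk : ∀ p ∈ s, ∀ i, dirD (a i) G p = G p * dirD (b i) G p) :
    ∀ l : List ι, ∀ p ∈ s, dirDs (l.map a) G p
      = (1 / (l.length + 1 : ℝ)) * dirDs (l.map b) (fun q => G q ^ (l.length + 1)) p := by
  intro l
  induction l with
  | nil => intro p _; simp [dirDs]
  | cons i l ih =>
    intro p hp
    set m := l.length with hm
    have hGm : ∀ k : ℕ, ContDiffOn ℝ ∞ (fun q => G q ^ k) s := fun k => hG.pow k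
    -- step 1: rewrite inner part via ih
    have step1 : dirDs ((i :: l).map a) G p
        = (1 / (m + 1 : ℝ)) * dirD (a i) (dirDs (l.map b) fun q => G q ^ (m + 1)) p := by
      show dirD (a i) (dirDs (l.map a) G) p = _
      rw [dirD_congr hs ih (a i) hp]
      exact dirD_const_mul
        (diffAt_of_smoothOn hs (smooth_dirDs hs (hGm (m + 1)) (l.map b)) hp) _ _
    -- step 2: commute dirD (a i) inside
    have step2 : dirD (a i) (dirDs (l.map b) fun q => G q ^ (m + 1)) p
        = dirDs (l.map b) (dirD (a i) fun q => G q ^ (m + 1)) p :=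
      dirD_dirDs_comm hs (hGm (m + 1)) (a i) (l.map b) p hp
    -- pointwise identity on s
    have key : ∀ q ∈ s, dirD (a i) (fun q' => G q' ^ (m + 1)) q
        = ((m + 1 : ℝ) / (m + 2 : ℝ)) * dirD (b i) (fun q' => G q' ^ (m + 2)) q := by
      intro q hq
      have hd : DifferentiableAt ℝ G q := diffAt_of_smoothOn hs hG hq
      rw [dirD_pow hd (m + 1) (a i), dirD_pow hd (m + 2) (b i), hfunk q hq i]
      have h2 : ((m : ℝ) + 2) ≠ 0 := by positivity
      push_cast
      field_simp
      ring
    -- step 3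
    have step3 : dirDs (l.map b) (dirD (a i) fun q => G q ^ (m + 1)) p
        = ((m + 1 : ℝ) / (m + 2 : ℝ)) * dirDs (l.map b) (dirD (b i) fun q => G q ^ (m + 2)) p := by
      rw [dirDs_congr hs key (l.map b) p hp]
      exact dirDs_const_mul hs (smooth_dirD hs (hGm (m + 2)) (b i)) _ (l.map b) p hp
    -- step 4: commute back
    have step4 : dirDs (l.map b) (dirD (b i) fun q => G q ^ (m + 2)) p
        = dirDs ((i :: l).map b) (fun q => G q ^ (m + 2)) p :=
      (dirD_dirDs_comm hs (hGm (m + 2)) (b i) (l.map b) p hp).symm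
    rw [step1, step2, step3, step4]
    have hlen2 : (i :: l).length + 1 = m + 2 := by simp [hm]
    rw [hlen2]
    have hlen : ((i :: l).length : ℝ) + 1 = (m : ℝ) + 2 := by
      simp only [List.length_cons, ← hm]; push_cast; ring
    rw [hlen, ← mul_assoc]
    congr 1
    have h2 : ((m : ℝ) + 2) ≠ 0 := by positivity
    field_simp

end Dir

section Bridge

variable {n : ℕ}

theorem pdxs_eq_dirDs {U V : Set (Fin n → ℝ)} (hU : IsOpen U) (hV : IsOpen V)
    (F : (Fin n → ℝ) → (Fin n → ℝ) → ℝ)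
    (hG : ContDiffOn ℝ ∞ (fun p : (Fin n → ℝ) × (Fin n → ℝ) => F p.1 p.2) (U ×ˢ V)) :
    ∀ l : List (Fin n), ∀ x ∈ U, ∀ y ∈ V,
      pdxs F l x y
        = dirDs (l.map fun i => ((Pi.single i 1 : Fin n → ℝ), (0 : Fin n → ℝ)))
            (fun p => F p.1 p.2) (x, y) := by
  intro l
  induction l with
  | nil => intro x _ y _; rfl
  | cons i l ih =>
    intro x hx y hy
    set G : (Fin n → ℝ) × (Fin n → ℝ) → ℝ := fun p => F p.1 p.2 with hGdef
    set K := dirDs (l.map fun i => ((Pi.single i 1 : Fin n → ℝ), (0 : Fin n → ℝ))) G with hK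
    show fderiv ℝ (fun x' => pdxs F l x' y) x (Pi.single i 1) = _
    have hev : (fun x' => pdxs F l x' y) =ᶠ[nhds x] fun x' => K (x', y) := by
      filter_upwards [hU.mem_nhds hx] with x' hx' using ih x' hx' y hy
    rw [hev.fderiv_eq]
    have hd : DifferentiableAt ℝ K (x, y) :=
      diffAt_of_smoothOn (hU.prod hV) (smooth_dirDs (hU.prod hV) hG _) ⟨hx, hy⟩
    have hc : HasFDerivAt (fun x' => K (x', y))
        ((fderiv ℝ K (x, y)).comp (ContinuousLinearMap.inl ℝ _ _)) x :=
      hd.hasFDerivAt.comp x (hasFDerivAt_prodMk_left x y)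
    rw [hc.fderiv]
    rfl

theorem pdys_eq_dirDs {U V : Set (Fin n → ℝ)} (hU : IsOpen U) (hV : IsOpen V)
    (F : (Fin n → ℝ) → (Fin n → ℝ) → ℝ)
    (hG : ContDiffOn ℝ ∞ (fun p : (Fin n → ℝ) × (Fin n → ℝ) => F p.1 p.2) (U ×ˢ V)) :
    ∀ l : List (Fin n), ∀ x ∈ U, ∀ y ∈ V,
      pdys F l x y
        = dirDs (l.map fun i => ((0 : Fin n → ℝ), (Pi.single i 1 : Fin n → ℝ)))
            (fun p => F p.1 p.2) (x, y) := by
  intro l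
  induction l with
  | nil => intro x _ y _; rfl
  | cons i l ih =>
    intro x hx y hy
    set G : (Fin n → ℝ) × (Fin n → ℝ) → ℝ := fun p => F p.1 p.2 with hGdef
    set K := dirDs (l.map fun i => ((0 : Fin n → ℝ), (Pi.single i 1 : Fin n → ℝ))) G with hK
    show fderiv ℝ (fun y' => pdys F l x y') y (Pi.single i 1) = _
    have hev : (fun y' => pdys F l x y') =ᶠ[nhds y] fun y' => K (x, y') := by
      filter_upwards [hV.mem_nhds hy] with y' hy' using ih x hx y' hy'
    rw [hev.fderiv_eq]
    have hd : DifferentiableAt ℝ K (x, y) :=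
      diffAt_of_smoothOn (hU.prod hV) (smooth_dirDs (hU.prod hV) hG _) ⟨hx, hy⟩
    have hc : HasFDerivAt (fun y' => K (x, y'))
        ((fderiv ℝ K (x, y)).comp (ContinuousLinearMap.inr ℝ _ _)) y :=
      hd.hasFDerivAt.comp y (hasFDerivAt_prodMk_right x y)
    rw [hc.fderiv]
    rfl

end Bridge

/-- For a solution `F` of the Funk equations, the `m`-th order `x`-derivatives satisfy
`F_{x^{i₁}⋯x^{iₘ}} = (1/(m+1)) (F^{m+1})_{y^{i₁}⋯y^{iₘ}}` for `m ≥ 1`. -/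
theorem funk_higher_derivs {n : ℕ} (U : Set (Fin n → ℝ)) (hU : IsOpen U)
    (F : (Fin n → ℝ) → (Fin n → ℝ) → ℝ)
    (hsm : ContDiffOn ℝ (⊤ : ℕ∞) (fun p : (Fin n → ℝ) × (Fin n → ℝ) => F p.1 p.2)
      (U ×ˢ {y : Fin n → ℝ | y ≠ 0}))
    (hfunk : ∀ x ∈ U, ∀ y : Fin n → ℝ, y ≠ 0 → ∀ i,
      pdx F i x y = F x y * pdy F i x y) :
    ∀ l : List (Fin n), l ≠ [] → ∀ x ∈ U, ∀ y : Fin n → ℝ, y ≠ 0 →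
      pdxs F l x y
        = (1 / (l.length + 1 : ℝ)) *
            pdys (fun x' y' => F x' y' ^ (l.length + 1)) l x y := by
  intro l _ x hx y hy
  have hV : IsOpen {y : Fin n → ℝ | y ≠ 0} := isOpen_ne
  have hs : IsOpen (U ×ˢ {y : Fin n → ℝ | y ≠ 0}) := hU.prod hV
  set G : (Fin n → ℝ) × (Fin n → ℝ) → ℝ := fun p => F p.1 p.2 with hGdef
  have hG : ContDiffOn ℝ ∞ G (U ×ˢ {y : Fin n → ℝ | y ≠ 0}) := hsm.of_le (by simp)
  set vx : Fin n → (Fin n → ℝ) × (Fin n → ℝ) :=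
    fun i => ((Pi.single i 1 : Fin n → ℝ), (0 : Fin n → ℝ)) with hvx
  set vy : Fin n → (Fin n → ℝ) × (Fin n → ℝ) :=
    fun i => ((0 : Fin n → ℝ), (Pi.single i 1 : Fin n → ℝ)) with hvy
  have hfunk' : ∀ p ∈ U ×ˢ {y : Fin n → ℝ | y ≠ 0}, ∀ i,
      dirD (vx i) G p = G p * dirD (vy i) G p := by
    rintro ⟨x', y'⟩ ⟨hx', hy'⟩ i
    have h1 := pdxs_eq_dirDs hU hV F hG [i] x' hx' y' hy'
    have h2 := pdys_eq_dirDs hU hV F hG [i] x' hx' y' hy'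
    simp only [List.map_cons, List.map_nil] at h1 h2
    have e1 : pdxs F [i] x' y' = pdx F i x' y' := rfl
    have e2 : pdys F [i] x' y' = pdy F i x' y' := rfl
    have e3 : dirDs [vx i] G (x', y') = dirD (vx i) G (x', y') := rfl
    have e4 : dirDs [vy i] G (x', y') = dirD (vy i) G (x', y') := rfl
    rw [← e3, ← h1, ← e4]
    rw [e1, hfunk x' hx' y' hy' i, ← e2, h2]
  have main := dirDs_funk hs hG vx vy hfunk' l (x, y) ⟨hx, hy⟩
  have hb1 := pdxs_eq_dirDs hU hV F hG l x hx y hy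
  have hb2 := pdys_eq_dirDs hU hV (fun x' y' => F x' y' ^ (l.length + 1))
    (hG.pow (l.length + 1)) l x hx y hy
  rw [hb1, hb2, main]
end

section
/- Let F satisfy the Funk equations F_{xⁱ} = F F_{yⁱ}, and suppose a smooth function F̃ on U × (ℝⁿ \ {0}) satisfies F̃_{xᵏ} = (F F̃)_{yᵏ} for all k. Then the second derivatives satisfy F̃_{xⁱxʲ} = (F² F̃)_{yⁱyʲ}, and more generally F̃_{x^{i₁}⋯x^{iₘ}} = (Fᵐ F̃)_{y^{i₁}⋯y^{iₘ}} for all m ≥ 1. -/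
set_option maxHeartbeats 1000000

/-! Auxiliary machinery: directional derivatives on the joint space. -/

/-- Directional derivative of `H` in direction `v`. -/
noncomputable def DD {E : Type*} [NormedAddCommGroup E] [NormedSpace ℝ E] (v : E) (H : E → ℝ) :
    E → ℝ := fun p => fderiv ℝ H p v

/-- Iterated directional derivatives along a list of directions. -/
noncomputable def DDs {E : Type*} [NormedAddCommGroup E] [NormedSpace ℝ E] :
    List E → (E → ℝ) → E → ℝ
  | [], H => H
  | v :: vs, H => DD v (DDs vs H)

section DDlemmas

variable {E : Type*} [NormedAddCommGroup E] [NormedSpace ℝ E] {s : Set E}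

lemma diffAt (hs : IsOpen s) {H : E → ℝ} (hH : ContDiffOn ℝ (⊤ : ℕ∞) H s) {p : E} (hp : p ∈ s) :
    DifferentiableAt ℝ H p :=
  (hH.contDiffAt (hs.mem_nhds hp)).differentiableAt (by simp)

lemma DD_contDiffOn (hs : IsOpen s) {H : E → ℝ} (hH : ContDiffOn ℝ (⊤ : ℕ∞) H s) (v : E) :
    ContDiffOn ℝ (⊤ : ℕ∞) (DD v H) s := by
  have h1 : ContDiffOn ℝ (⊤ : ℕ∞) (fderiv ℝ H) s := hH.fderiv_of_isOpen hs (by simp)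
  exact (ContinuousLinearMap.apply ℝ ℝ v).contDiff.comp_contDiffOn h1

lemma DDs_contDiffOn (hs : IsOpen s) {H : E → ℝ} (hH : ContDiffOn ℝ (⊤ : ℕ∞) H s) :
    ∀ vs : List E, ContDiffOn ℝ (⊤ : ℕ∞) (DDs vs H) s
  | [] => hH
  | v :: vs => DD_contDiffOn hs (DDs_contDiffOn hs hH vs) v

lemma DD_congr (hs : IsOpen s) {H₁ H₂ : E → ℝ} (h : ∀ q ∈ s, H₁ q = H₂ q) (v : E)
    {p : E} (hp : p ∈ s) : DD v H₁ p = DD v H₂ p := by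
  have heq : H₁ =ᶠ[nhds p] H₂ := Filter.eventually_of_mem (hs.mem_nhds hp) h
  show fderiv ℝ H₁ p v = fderiv ℝ H₂ p v
  rw [heq.fderiv_eq]

lemma DDs_congr (hs : IsOpen s) {H₁ H₂ : E → ℝ} (h : ∀ q ∈ s, H₁ q = H₂ q) :
    ∀ (vs : List E) (p : E), p ∈ s → DDs vs H₁ p = DDs vs H₂ p
  | [], p, hp => h p hp
  | v :: vs, p, hp => DD_congr hs (fun q hq => DDs_congr hs h vs q hq) v hp

lemma DD_swap (hs : IsOpen s) {H : E → ℝ} (hH : ContDiffOn ℝ (⊤ : ℕ∞) H s) (v w : E)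
    {p : E} (hp : p ∈ s) : DD v (DD w H) p = DD w (DD v H) p := by
  have hmem : s ∈ nhds p := hs.mem_nhds hp
  have hH1 : ContDiffOn ℝ (⊤ : ℕ∞) (fderiv ℝ H) s := hH.fderiv_of_isOpen hs (by simp)
  have hd : DifferentiableAt ℝ (fderiv ℝ H) p :=
    (hH1.contDiffAt hmem).differentiableAt (by simp)
  have key : ∀ u : E, fderiv ℝ (fun q => fderiv ℝ H q u) p
      = (fderiv ℝ (fderiv ℝ H) p).flip u := by
    intro u
    have h2 := fderiv_clm_apply hd (differentiableAt_const u)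
    simpa using h2
  have hsymm := (hH.contDiffAt hmem).isSymmSndFDerivAt (by rw [minSmoothness_of_isRCLikeNormedField]; exact WithTop.coe_le_coe.mpr le_top)
  show fderiv ℝ (fun q => fderiv ℝ H q w) p v = fderiv ℝ (fun q => fderiv ℝ H q v) p w
  rw [key w, key v]
  simpa [ContinuousLinearMap.flip_apply] using hsymm v w

lemma DD_DDs_comm (hs : IsOpen s) {H : E → ℝ} (hH : ContDiffOn ℝ (⊤ : ℕ∞) H s) :
    ∀ (vs : List E) (v : E) (p : E), p ∈ s → DD v (DDs vs H) p = DDs vs (DD v H) p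
  | [], v, p, hp => rfl
  | w :: vs, v, p, hp => by
    calc DD v (DD w (DDs vs H)) p = DD w (DD v (DDs vs H)) p :=
          DD_swap hs (DDs_contDiffOn hs hH vs) v w hp
      _ = DD w (DDs vs (DD v H)) p :=
          DD_congr hs (fun q hq => DD_DDs_comm hs hH vs v q hq) w hp
      _ = DDs (w :: vs) (DD v H) p := rfl

lemma DD_mul (v : E) {H₁ H₂ : E → ℝ} {p : E}
    (h1 : DifferentiableAt ℝ H₁ p) (h2 : DifferentiableAt ℝ H₂ p) :
    DD v (fun q => H₁ q * H₂ q) p = DD v H₁ p * H₂ p + H₁ p * DD v H₂ p := by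
  show fderiv ℝ (fun q => H₁ q * H₂ q) p v = _
  rw [fderiv_fun_mul h1 h2]
  show H₁ p * fderiv ℝ H₂ p v + H₂ p * fderiv ℝ H₁ p v = _
  show _ = fderiv ℝ H₁ p v * H₂ p + H₁ p * fderiv ℝ H₂ p v
  ring

variable {ι : Type*}

lemma R_pow (hs : IsOpen s) {Fj : E → ℝ} (hF : ContDiffOn ℝ (⊤ : ℕ∞) Fj s)
    (ex ey : ι → E)
    (hfunk : ∀ p ∈ s, ∀ i, DD (ex i) Fj p = Fj p * DD (ey i) Fj p)
    {G : E → ℝ} (hG : ContDiffOn ℝ (⊤ : ℕ∞) G s)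
    (hR : ∀ p ∈ s, ∀ k, DD (ex k) G p = DD (ey k) (fun q => Fj q * G q) p) :
    ∀ m : ℕ, ∀ p ∈ s, ∀ k,
      DD (ex k) (fun q => Fj q ^ m * G q) p
        = DD (ey k) (fun q => Fj q ^ (m + 1) * G q) p := by
  intro m
  induction m with
  | zero =>
    intro p hp k
    have e0 : (fun q => Fj q ^ 0 * G q) = G := by funext q; simp
    have e1 : (fun q => Fj q ^ (0 + 1) * G q) = fun q => Fj q * G q := by funext q; simp
    rw [e0, e1]
    exact hR p hp k
  | succ m ih =>
    intro p hp k
    have em : (fun q => Fj q ^ (m + 1) * G q) = fun q => Fj q * (Fj q ^ m * G q) := by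
      funext q; ring
    have em2 : (fun q => Fj q ^ (m + 1 + 1) * G q) = fun q => Fj q * (Fj q ^ (m + 1) * G q) := by
      funext q; ring
    have hGm : ContDiffOn ℝ (⊤ : ℕ∞) (fun q => Fj q ^ m * G q) s := (hF.pow _).mul hG
    have hGm1 : ContDiffOn ℝ (⊤ : ℕ∞) (fun q => Fj q ^ (m + 1) * G q) s := (hF.pow _).mul hG
    have dF := diffAt hs hF hp
    have dGm := diffAt hs hGm hp
    have dGm1 := diffAt hs hGm1 hp
    have expand : DD (ey k) (fun q => Fj q ^ (m + 1) * G q) p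
        = DD (ey k) Fj p * (Fj p ^ m * G p)
          + Fj p * DD (ey k) (fun q => Fj q ^ m * G q) p := by
      rw [em, DD_mul _ dF dGm]
    rw [em, em2, DD_mul _ dF dGm, DD_mul _ dF dGm1, hfunk p hp k, ih p hp k, expand]
    ring

lemma funk_list (hs : IsOpen s) {Fj : E → ℝ} (hF : ContDiffOn ℝ (⊤ : ℕ∞) Fj s)
    (ex ey : ι → E)
    (hfunk : ∀ p ∈ s, ∀ i, DD (ex i) Fj p = Fj p * DD (ey i) Fj p)
    {G : E → ℝ} (hG : ContDiffOn ℝ (⊤ : ℕ∞) G s)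
    (hR : ∀ p ∈ s, ∀ k, DD (ex k) G p = DD (ey k) (fun q => Fj q * G q) p) :
    ∀ l : List ι, ∀ p ∈ s,
      DDs (l.map ex) G p = DDs (l.map ey) (fun q => Fj q ^ l.length * G q) p := by
  intro l
  induction l with
  | nil =>
    intro p hp
    show G p = Fj p ^ 0 * G p
    simp
  | cons i l ih =>
    intro p hp
    have hGm : ContDiffOn ℝ (⊤ : ℕ∞) (fun q => Fj q ^ l.length * G q) s := (hF.pow _).mul hG
    have hGm1 : ContDiffOn ℝ (⊤ : ℕ∞) (fun q => Fj q ^ (l.length + 1) * G q) s := (hF.pow _).mul hG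
    calc DDs ((i :: l).map ex) G p
        = DD (ex i) (DDs (l.map ex) G) p := rfl
      _ = DD (ex i) (DDs (l.map ey) (fun q => Fj q ^ l.length * G q)) p :=
          DD_congr hs (fun q hq => ih q hq) (ex i) hp
      _ = DDs (l.map ey) (DD (ex i) (fun q => Fj q ^ l.length * G q)) p :=
          DD_DDs_comm hs hGm (l.map ey) (ex i) p hp
      _ = DDs (l.map ey) (DD (ey i) (fun q => Fj q ^ (l.length + 1) * G q)) p :=
          DDs_congr hs
            (fun q hq => R_pow hs hF ex ey hfunk hG hR l.length q hq i) (l.map ey) p hp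
      _ = DD (ey i) (DDs (l.map ey) (fun q => Fj q ^ (l.length + 1) * G q)) p :=
          (DD_DDs_comm hs hGm1 (l.map ey) (ey i) p hp).symm
      _ = DDs ((i :: l).map ey) (fun q => Fj q ^ (i :: l).length * G q) p := rfl

end DDlemmas

section Slice

variable {n : ℕ}

/-- x-direction basis vector in the joint space. -/
def exv (i : Fin n) : (Fin n → ℝ) × (Fin n → ℝ) := ((Pi.single i 1 : Fin n → ℝ), 0)

/-- y-direction basis vector in the joint space. -/
def eyv (i : Fin n) : (Fin n → ℝ) × (Fin n → ℝ) := (0, (Pi.single i 1 : Fin n → ℝ))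

lemma pdx_eq_DD (G : (Fin n → ℝ) → (Fin n → ℝ) → ℝ) (i : Fin n)
    (p : (Fin n → ℝ) × (Fin n → ℝ))
    (h : DifferentiableAt ℝ (fun q : (Fin n → ℝ) × (Fin n → ℝ) => G q.1 q.2) p) :
    pdx G i p.1 p.2 = DD (exv i) (fun q : (Fin n → ℝ) × (Fin n → ℝ) => G q.1 q.2) p := by
  have hι : HasFDerivAt (fun x' : Fin n → ℝ => (x', p.2))
      ((ContinuousLinearMap.id ℝ (Fin n → ℝ)).prod 0) p.1 :=
    HasFDerivAt.prodMk (hasFDerivAt_id p.1) (hasFDerivAt_const p.2 p.1)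
  have hc : HasFDerivAt (fun x' => G x' p.2)
      ((fderiv ℝ (fun q : (Fin n → ℝ) × (Fin n → ℝ) => G q.1 q.2) p).comp
        ((ContinuousLinearMap.id ℝ (Fin n → ℝ)).prod 0)) p.1 :=
    by have := h.hasFDerivAt.comp p.1 hι; exact this
  show fderiv ℝ (fun x' => G x' p.2) p.1 (Pi.single i 1)
      = fderiv ℝ (fun q : (Fin n → ℝ) × (Fin n → ℝ) => G q.1 q.2) p (exv i)
  rw [hc.fderiv]
  rfl

lemma pdy_eq_DD (G : (Fin n → ℝ) → (Fin n → ℝ) → ℝ) (i : Fin n)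
    (p : (Fin n → ℝ) × (Fin n → ℝ))
    (h : DifferentiableAt ℝ (fun q : (Fin n → ℝ) × (Fin n → ℝ) => G q.1 q.2) p) :
    pdy G i p.1 p.2 = DD (eyv i) (fun q : (Fin n → ℝ) × (Fin n → ℝ) => G q.1 q.2) p := by
  have hι : HasFDerivAt (fun y' : Fin n → ℝ => (p.1, y'))
      ((0 : (Fin n → ℝ) →L[ℝ] (Fin n → ℝ)).prod (ContinuousLinearMap.id ℝ (Fin n → ℝ))) p.2 :=
    HasFDerivAt.prodMk (hasFDerivAt_const p.1 p.2) (hasFDerivAt_id p.2)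
  have hc : HasFDerivAt (fun y' => G p.1 y')
      ((fderiv ℝ (fun q : (Fin n → ℝ) × (Fin n → ℝ) => G q.1 q.2) p).comp
        ((0 : (Fin n → ℝ) →L[ℝ] (Fin n → ℝ)).prod (ContinuousLinearMap.id ℝ (Fin n → ℝ)))) p.2 :=
    by have := h.hasFDerivAt.comp p.2 hι; exact this
  show fderiv ℝ (fun y' => G p.1 y') p.2 (Pi.single i 1)
      = fderiv ℝ (fun q : (Fin n → ℝ) × (Fin n → ℝ) => G q.1 q.2) p (eyv i)
  rw [hc.fderiv]
  rfl

variable {s : Set ((Fin n → ℝ) × (Fin n → ℝ))}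

lemma pdx_congr_DD (hs : IsOpen s) (G : (Fin n → ℝ) → (Fin n → ℝ) → ℝ)
    (H : ((Fin n → ℝ) × (Fin n → ℝ)) → ℝ)
    (hGH : ∀ p ∈ s, G p.1 p.2 = H p) (i : Fin n) {p : (Fin n → ℝ) × (Fin n → ℝ)}
    (hp : p ∈ s) (hH : DifferentiableAt ℝ H p) :
    pdx G i p.1 p.2 = DD (exv i) H p := by
  have h1 : pdx G i p.1 p.2 = pdx (fun x y => H (x, y)) i p.1 p.2 := by
    show fderiv ℝ (fun x' => G x' p.2) p.1 (Pi.single i 1)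
        = fderiv ℝ (fun x' => H (x', p.2)) p.1 (Pi.single i 1)
    congr 1
    apply Filter.EventuallyEq.fderiv_eq
    have hopen : IsOpen {x' : Fin n → ℝ | (x', p.2) ∈ s} :=
      hs.preimage (by continuity)
    have hx : p.1 ∈ {x' : Fin n → ℝ | (x', p.2) ∈ s} := hp
    filter_upwards [hopen.mem_nhds hx] with x' hx'
    exact hGH (x', p.2) hx'
  rw [h1]
  exact pdx_eq_DD (fun x y => H (x, y)) i p hH

lemma pdy_congr_DD (hs : IsOpen s) (G : (Fin n → ℝ) → (Fin n → ℝ) → ℝ)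
    (H : ((Fin n → ℝ) × (Fin n → ℝ)) → ℝ)
    (hGH : ∀ p ∈ s, G p.1 p.2 = H p) (i : Fin n) {p : (Fin n → ℝ) × (Fin n → ℝ)}
    (hp : p ∈ s) (hH : DifferentiableAt ℝ H p) :
    pdy G i p.1 p.2 = DD (eyv i) H p := by
  have h1 : pdy G i p.1 p.2 = pdy (fun x y => H (x, y)) i p.1 p.2 := by
    show fderiv ℝ (fun y' => G p.1 y') p.2 (Pi.single i 1)
        = fderiv ℝ (fun y' => H (p.1, y')) p.2 (Pi.single i 1)
    congr 1
    apply Filter.EventuallyEq.fderiv_eq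
    have hopen : IsOpen {y' : Fin n → ℝ | (p.1, y') ∈ s} :=
      hs.preimage (by continuity)
    have hy : p.2 ∈ {y' : Fin n → ℝ | (p.1, y') ∈ s} := hp
    filter_upwards [hopen.mem_nhds hy] with y' hy'
    exact hGH (p.1, y') hy'
  rw [h1]
  exact pdy_eq_DD (fun x y => H (x, y)) i p hH

lemma pdxs_eq (hs : IsOpen s) (G : (Fin n → ℝ) → (Fin n → ℝ) → ℝ)
    (hG : ContDiffOn ℝ (⊤ : ℕ∞) (fun q : (Fin n → ℝ) × (Fin n → ℝ) => G q.1 q.2) s) :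
    ∀ (l : List (Fin n)) (p : (Fin n → ℝ) × (Fin n → ℝ)), p ∈ s →
      pdxs G l p.1 p.2 = DDs (l.map exv) (fun q : (Fin n → ℝ) × (Fin n → ℝ) => G q.1 q.2) p
  | [], p, hp => rfl
  | i :: l, p, hp => by
    have hsmD := DDs_contDiffOn hs hG (l.map exv)
    exact pdx_congr_DD hs (pdxs G l) _ (fun q hq => pdxs_eq hs G hG l q hq) i hp
      (diffAt hs hsmD hp)

lemma pdys_eq (hs : IsOpen s) (G : (Fin n → ℝ) → (Fin n → ℝ) → ℝ)
    (hG : ContDiffOn ℝ (⊤ : ℕ∞) (fun q : (Fin n → ℝ) × (Fin n → ℝ) => G q.1 q.2) s) :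
    ∀ (l : List (Fin n)) (p : (Fin n → ℝ) × (Fin n → ℝ)), p ∈ s →
      pdys G l p.1 p.2 = DDs (l.map eyv) (fun q : (Fin n → ℝ) × (Fin n → ℝ) => G q.1 q.2) p
  | [], p, hp => rfl
  | i :: l, p, hp => by
    have hsmD := DDs_contDiffOn hs hG (l.map eyv)
    exact pdy_congr_DD hs (pdys G l) _ (fun q hq => pdys_eq hs G hG l q hq) i hp
      (diffAt hs hsmD hp)

end Slice

/-- If `F` solves the Funk equations and `F̃` solves `F̃_{xᵏ} = (F F̃)_{yᵏ}`, then
`F̃_{xⁱxʲ} = (F² F̃)_{yⁱyʲ}` and more generally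
`F̃_{x^{i₁}⋯x^{iₘ}} = (Fᵐ F̃)_{y^{i₁}⋯y^{iₘ}}` for all `m ≥ 1`. -/
theorem funk_tilde_higher_derivs {n : ℕ} (U : Set (Fin n → ℝ)) (hU : IsOpen U)
    (F Ft : (Fin n → ℝ) → (Fin n → ℝ) → ℝ)
    (hsm : ContDiffOn ℝ (⊤ : ℕ∞) (fun p : (Fin n → ℝ) × (Fin n → ℝ) => F p.1 p.2)
      (U ×ˢ {y : Fin n → ℝ | y ≠ 0}))
    (hsm' : ContDiffOn ℝ (⊤ : ℕ∞) (fun p : (Fin n → ℝ) × (Fin n → ℝ) => Ft p.1 p.2)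
      (U ×ˢ {y : Fin n → ℝ | y ≠ 0}))
    (hfunk : ∀ x ∈ U, ∀ y : Fin n → ℝ, y ≠ 0 → ∀ i,
      pdx F i x y = F x y * pdy F i x y)
    (hFt : ∀ x ∈ U, ∀ y : Fin n → ℝ, y ≠ 0 → ∀ k,
      pdx Ft k x y = pdy (fun x' y' => F x' y' * Ft x' y') k x y) :
    (∀ x ∈ U, ∀ y : Fin n → ℝ, y ≠ 0 → ∀ i j : Fin n,
      pdx (pdx Ft j) i x y
        = pdy (pdy (fun x' y' => F x' y' ^ 2 * Ft x' y') j) i x y) ∧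
    (∀ l : List (Fin n), l ≠ [] → ∀ x ∈ U, ∀ y : Fin n → ℝ, y ≠ 0 →
      pdxs Ft l x y
        = pdys (fun x' y' => F x' y' ^ l.length * Ft x' y') l x y) := by
  have hs : IsOpen (U ×ˢ {y : Fin n → ℝ | y ≠ 0}) := hU.prod isOpen_ne
  set s := U ×ˢ {y : Fin n → ℝ | y ≠ 0} with hsdef
  have hfunkJ : ∀ p ∈ s, ∀ i : Fin n,
      DD (exv i) (fun q : (Fin n → ℝ) × (Fin n → ℝ) => F q.1 q.2) p
        = F p.1 p.2 * DD (eyv i) (fun q : (Fin n → ℝ) × (Fin n → ℝ) => F q.1 q.2) p := by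
    intro p hp i
    have dF := diffAt hs hsm hp
    rw [← pdx_eq_DD F i p dF, ← pdy_eq_DD F i p dF]
    exact hfunk p.1 hp.1 p.2 hp.2 i
  have hFtJ : ∀ p ∈ s, ∀ k : Fin n,
      DD (exv k) (fun q : (Fin n → ℝ) × (Fin n → ℝ) => Ft q.1 q.2) p
        = DD (eyv k) (fun q : (Fin n → ℝ) × (Fin n → ℝ) => F q.1 q.2 * Ft q.1 q.2) p := by
    intro p hp k
    have h1 := pdx_eq_DD Ft k p (diffAt hs hsm' hp)
    have h2 := pdy_eq_DD (fun x' y' => F x' y' * Ft x' y') k p (diffAt hs (hsm.mul hsm') hp)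
    calc DD (exv k) (fun q : (Fin n → ℝ) × (Fin n → ℝ) => Ft q.1 q.2) p
        = pdx Ft k p.1 p.2 := h1.symm
      _ = pdy (fun x' y' => F x' y' * Ft x' y') k p.1 p.2 := hFt p.1 hp.1 p.2 hp.2 k
      _ = DD (eyv k) (fun q : (Fin n → ℝ) × (Fin n → ℝ) => F q.1 q.2 * Ft q.1 q.2) p := h2
  have main : ∀ l : List (Fin n), ∀ x ∈ U, ∀ y : Fin n → ℝ, y ≠ 0 →
      pdxs Ft l x y = pdys (fun x' y' => F x' y' ^ l.length * Ft x' y') l x y := by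
    intro l x hx y hy
    have hp : ((x, y) : (Fin n → ℝ) × (Fin n → ℝ)) ∈ s := ⟨hx, hy⟩
    have h1 := pdxs_eq hs Ft hsm' l (x, y) hp
    have h2 := pdys_eq hs (fun x' y' => F x' y' ^ l.length * Ft x' y')
      ((hsm.pow _).mul hsm') l (x, y) hp
    have h3 := funk_list hs hsm exv eyv hfunkJ hsm' hFtJ l (x, y) hp
    calc pdxs Ft l x y
        = DDs (l.map exv) (fun q : (Fin n → ℝ) × (Fin n → ℝ) => Ft q.1 q.2) (x, y) := h1
      _ = DDs (l.map eyv)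
            (fun q : (Fin n → ℝ) × (Fin n → ℝ) => F q.1 q.2 ^ l.length * Ft q.1 q.2) (x, y) := h3
      _ = pdys (fun x' y' => F x' y' ^ l.length * Ft x' y') l x y := h2.symm
  refine ⟨?_, fun l _ => main l⟩
  intro x hx y hy i j
  have h := main [i, j] x hx y hy
  simpa [pdxs, pdys] using h
end

section
/- (Rapcsák criterion, one direction) If a smooth function F̃ on U × (ℝⁿ \ {0}), positively 1-homogeneous in y, satisfies F̃_{xᵏ} = (F F̃)_{yᵏ} for all k, where F is positively 1-homogeneous in y, then F̃ satisfies the Rapcsák equations F̃_{xᵏyˡ} yᵏ = F̃_{xˡ} for all l, and moreover F̃_{xˡ} yˡ = 2 F F̃. -/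
open Filter in
/-- Euler's identity for positively homogeneous functions. -/
private lemma euler_aux {E : Type*} [NormedAddCommGroup E] [NormedSpace ℝ E]
    {f : E → ℝ} {y : E} {d : ℕ} (hf : DifferentiableAt ℝ f y)
    (h : ∀ c : ℝ, 0 < c → f (c • y) = c ^ d * f y) :
    fderiv ℝ f y y = d * f y := by
  have h1 : HasDerivAt (fun t : ℝ => t • y) y 1 := by
    simpa using (hasDerivAt_id (1 : ℝ)).smul_const y
  have h2 : HasDerivAt (fun t : ℝ => f (t • y)) (fderiv ℝ f y y) 1 := by
    have hf' : HasFDerivAt f (fderiv ℝ f y) ((1 : ℝ) • y) := by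
      simpa using hf.hasFDerivAt
    exact hf'.comp_hasDerivAt 1 h1
  have h3 : HasDerivAt (fun t : ℝ => t ^ d * f y) (d * f y) 1 := by
    simpa using (hasDerivAt_pow d (1 : ℝ)).mul_const (f y)
  have heq : (fun t : ℝ => f (t • y)) =ᶠ[nhds (1 : ℝ)] fun t => t ^ d * f y := by
    filter_upwards [Ioi_mem_nhds (by norm_num : (0 : ℝ) < 1)] with t ht
    exact h t ht
  exact h2.unique (h3.congr_of_eventuallyEq heq)

/-- Rapcsák criterion, one direction: if `F̃_{xᵏ} = (F F̃)_{yᵏ}` and `F`, `F̃` are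
positively 1-homogeneous in `y`, then `F̃_{xᵏyˡ} yᵏ = F̃_{xˡ}` and `F̃_{xˡ} yˡ = 2 F F̃`. -/
theorem rapcsak_forward {n : ℕ} (U : Set (Fin n → ℝ)) (hU : IsOpen U)
    (F Ft : (Fin n → ℝ) → (Fin n → ℝ) → ℝ)
    (hsm : ContDiffOn ℝ (⊤ : ℕ∞) (fun p : (Fin n → ℝ) × (Fin n → ℝ) => F p.1 p.2)
      (U ×ˢ {y : Fin n → ℝ | y ≠ 0}))
    (hsm' : ContDiffOn ℝ (⊤ : ℕ∞) (fun p : (Fin n → ℝ) × (Fin n → ℝ) => Ft p.1 p.2)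
      (U ×ˢ {y : Fin n → ℝ | y ≠ 0}))
    (hhomF : ∀ x, ∀ y : Fin n → ℝ, ∀ l : ℝ, 0 < l → F x (l • y) = l * F x y)
    (hhomFt : ∀ x, ∀ y : Fin n → ℝ, ∀ l : ℝ, 0 < l → Ft x (l • y) = l * Ft x y)
    (hFt : ∀ x ∈ U, ∀ y : Fin n → ℝ, y ≠ 0 → ∀ k,
      pdx Ft k x y = pdy (fun x' y' => F x' y' * Ft x' y') k x y) :
    ∀ x ∈ U, ∀ y : Fin n → ℝ, y ≠ 0 →
      (∀ l : Fin n, (∑ k, pdy (pdx Ft k) l x y * y k) = pdx Ft l x y) ∧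
      (∑ l, pdx Ft l x y * y l) = 2 * F x y * Ft x y := by
  intro x hx y hy
  classical
  have hopen : IsOpen (U ×ˢ {y : Fin n → ℝ | y ≠ 0}) := hU.prod isOpen_ne
  set g : (Fin n → ℝ) → ℝ := fun y' => F x y' * Ft x y' with hgdef
  have hg : ∀ y' : Fin n → ℝ, y' ≠ 0 → ContDiffAt ℝ (⊤ : ℕ∞) g y' := by
    intro y' hy'
    have hmem : (U ×ˢ {y : Fin n → ℝ | y ≠ 0}) ∈ nhds (x, y') :=
      hopen.mem_nhds ⟨hx, hy'⟩
    have h1 := (hsm.contDiffAt hmem).mul (hsm'.contDiffAt hmem)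
    have h2 : ContDiffAt ℝ (⊤ : ℕ∞) (fun y'' : Fin n → ℝ => ((x, y'') : _ × _)) y' :=
      ContDiffAt.prodMk contDiffAt_const contDiffAt_id
    exact h1.comp y' h2
  have hdg : ∀ y' : Fin n → ℝ, y' ≠ 0 → DifferentiableAt ℝ g y' := fun y' hy' =>
    (hg y' hy').differentiableAt (by simp)
  have hgscale : ∀ c : ℝ, 0 < c → ∀ y' : Fin n → ℝ, g (c • y') = c ^ 2 * g y' := by
    intro c hc y'
    simp only [hgdef]
    rw [hhomF x y' c hc, hhomFt x y' c hc]; ring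
  -- scaling of the derivative of `g`
  have hderiv_scale : ∀ c : ℝ, 0 < c → ∀ v, fderiv ℝ g (c • y) v = c * fderiv ℝ g y v := by
    intro c hc v
    have hc1 : HasFDerivAt (fun y' : Fin n → ℝ => c • y')
        (c • ContinuousLinearMap.id ℝ (Fin n → ℝ)) y := (hasFDerivAt_id y).const_smul c
    have e1 : HasFDerivAt (fun y' : Fin n → ℝ => g (c • y'))
        ((fderiv ℝ g (c • y)).comp (c • ContinuousLinearMap.id ℝ (Fin n → ℝ))) y :=
      (hdg (c • y) (smul_ne_zero hc.ne' hy)).hasFDerivAt.comp y hc1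
    have e2 : HasFDerivAt (fun y' : Fin n → ℝ => c ^ 2 * g y')
        ((c ^ 2 : ℝ) • fderiv ℝ g y) y := ((hdg y hy).hasFDerivAt).const_mul (c ^ 2)
    have heq : (fun y' : Fin n → ℝ => c ^ 2 * g y') =ᶠ[nhds y]
        (fun y' : Fin n → ℝ => g (c • y')) :=
      Filter.Eventually.of_forall fun y' => (hgscale c hc y').symm
    have key := e2.unique (e1.congr_of_eventuallyEq heq)
    have kv : c ^ 2 * fderiv ℝ g y v = c * fderiv ℝ g (c • y) v := by
      have h := congrFun (congrArg DFunLike.coe key) v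
      simpa [smul_eq_mul, map_smul, mul_comm, mul_left_comm] using h
    refine mul_left_cancel₀ hc.ne' ?_
    rw [← kv]; ring
  have hfd1 : ContDiffAt ℝ 1 (fderiv ℝ g) y := (hg y hy).fderiv_right (m := 1) (WithTop.coe_le_coe.mpr le_top)
  have hBdiff : DifferentiableAt ℝ (fderiv ℝ g) y := hfd1.differentiableAt one_ne_zero
  have hL : ∀ v w : Fin n → ℝ, fderiv ℝ (fun y' => fderiv ℝ g y' v) y w
      = fderiv ℝ (fderiv ℝ g) y w v := by
    intro v w
    have h1 : HasFDerivAt (fun y' : Fin n → ℝ => fderiv ℝ g y' v)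
        ((ContinuousLinearMap.apply ℝ ℝ v).comp (fderiv ℝ (fderiv ℝ g) y)) y :=
      (ContinuousLinearMap.apply ℝ ℝ v).hasFDerivAt.comp y hBdiff.hasFDerivAt
    rw [h1.fderiv]; rfl
  have hdiff_h : ∀ v : Fin n → ℝ, DifferentiableAt ℝ (fun y' => fderiv ℝ g y' v) y := by
    intro v
    exact ((ContinuousLinearMap.apply ℝ ℝ v).hasFDerivAt.comp y
      hBdiff.hasFDerivAt).differentiableAt
  have euler_g : fderiv ℝ g y y = 2 * g y := by
    have := euler_aux (d := 2) (hdg y hy) (fun c hc => hgscale c hc y)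
    simpa using this
  have euler_h : ∀ v, fderiv ℝ (fun y' => fderiv ℝ g y' v) y y = fderiv ℝ g y v := by
    intro v
    have := euler_aux (d := 1) (hdiff_h v)
      (fun c hc => by simpa using hderiv_scale c hc v)
    simpa using this
  have hpdyG : ∀ (k : Fin n) (y' : Fin n → ℝ),
      pdy (fun x' y' => F x' y' * Ft x' y') k x y' = fderiv ℝ g y' (Pi.single k 1) :=
    fun k y' => rfl
  have hev : ∀ k : Fin n, (fun y' => pdx Ft k x y') =ᶠ[nhds y]
      (fun y' => fderiv ℝ g y' (Pi.single k 1)) := by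
    intro k
    filter_upwards [isOpen_ne.mem_nhds hy] with y' hy'
    rw [hFt x hx y' hy' k, hpdyG]
  have hbasis : ∑ k, (y k) • (Pi.single k (1 : ℝ) : Fin n → ℝ) = y := by
    ext j
    simp [Pi.single_apply, Finset.sum_ite_eq]
  have hsum_apply : ∀ (L : (Fin n → ℝ) →L[ℝ] ℝ),
      ∑ k, L (Pi.single k 1) * y k = L y := by
    intro L
    conv_rhs => rw [← hbasis, map_sum]
    refine Finset.sum_congr rfl fun k _ => ?_
    rw [map_smul]; simp [mul_comm]
  have hsymm : ∀ v w, fderiv ℝ (fderiv ℝ g) y v w = fderiv ℝ (fderiv ℝ g) y w v :=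
    (hg y hy).isSymmSndFDerivAt (by
      rw [minSmoothness_of_isRCLikeNormedField]; exact WithTop.coe_le_coe.mpr le_top)
  constructor
  · intro l
    have hpd : ∀ k, pdy (pdx Ft k) l x y
        = fderiv ℝ (fderiv ℝ g) y (Pi.single l 1) (Pi.single k 1) := by
      intro k
      show fderiv ℝ (fun y' => pdx Ft k x y') y (Pi.single l 1) = _
      rw [(hev k).fderiv_eq, hL]
    calc ∑ k, pdy (pdx Ft k) l x y * y k
        = ∑ k, fderiv ℝ (fderiv ℝ g) y (Pi.single l 1) (Pi.single k 1) * y k := by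
          simp only [hpd]
      _ = fderiv ℝ (fderiv ℝ g) y (Pi.single l 1) y := hsum_apply _
      _ = fderiv ℝ (fderiv ℝ g) y y (Pi.single l 1) := hsymm _ _
      _ = fderiv ℝ (fun y' => fderiv ℝ g y' (Pi.single l 1)) y y := (hL _ y).symm
      _ = fderiv ℝ g y (Pi.single l 1) := euler_h _
      _ = pdx Ft l x y := by rw [hFt x hx y hy l, hpdyG]
  · calc ∑ l, pdx Ft l x y * y l
        = ∑ l, fderiv ℝ g y (Pi.single l 1) * y l := by
          refine Finset.sum_congr rfl fun l _ => ?_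
          rw [hFt x hx y hy l, hpdyG]
      _ = fderiv ℝ g y y := hsum_apply _
      _ = 2 * g y := euler_g
      _ = 2 * F x y * Ft x y := by show 2 * (F x y * Ft x y) = _; ring
end

section
/- (Rapcsák criterion, converse direction) Suppose F̃ is smooth on U × (ℝⁿ \ {0}), positively 1-homogeneous in y, F is positively 1-homogeneous in y, and F̃ satisfies both the Rapcsák equations F̃_{xᵏyˡ} yᵏ = F̃_{xˡ} and the projective factor identity F̃_{xᵏ} yᵏ = 2 F F̃. Then F̃_{xᵏ} = (F F̃)_{yᵏ} for all k. -/
/-- Rapcsák criterion, converse direction: if `F̃` satisfies the Rapcsák equations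
`F̃_{xᵏyˡ} yᵏ = F̃_{xˡ}` and `F̃_{xᵏ} yᵏ = 2 F F̃`, then `F̃_{xᵏ} = (F F̃)_{yᵏ}`. -/
theorem rapcsak_converse {n : ℕ} (U : Set (Fin n → ℝ)) (hU : IsOpen U)
    (F Ft : (Fin n → ℝ) → (Fin n → ℝ) → ℝ)
    (hsm : ContDiffOn ℝ (⊤ : ℕ∞) (fun p : (Fin n → ℝ) × (Fin n → ℝ) => F p.1 p.2)
      (U ×ˢ {y : Fin n → ℝ | y ≠ 0}))
    (hsm' : ContDiffOn ℝ (⊤ : ℕ∞) (fun p : (Fin n → ℝ) × (Fin n → ℝ) => Ft p.1 p.2)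
      (U ×ˢ {y : Fin n → ℝ | y ≠ 0}))
    (hhomF : ∀ x, ∀ y : Fin n → ℝ, ∀ l : ℝ, 0 < l → F x (l • y) = l * F x y)
    (hhomFt : ∀ x, ∀ y : Fin n → ℝ, ∀ l : ℝ, 0 < l → Ft x (l • y) = l * Ft x y)
    (hRap : ∀ x ∈ U, ∀ y : Fin n → ℝ, y ≠ 0 → ∀ l : Fin n,
      (∑ k, pdy (pdx Ft k) l x y * y k) = pdx Ft l x y)
    (hProj : ∀ x ∈ U, ∀ y : Fin n → ℝ, y ≠ 0 →
      (∑ k, pdx Ft k x y * y k) = 2 * F x y * Ft x y) :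
    ∀ x ∈ U, ∀ y : Fin n → ℝ, y ≠ 0 → ∀ k : Fin n,
      pdx Ft k x y = pdy (fun x' y' => F x' y' * Ft x' y') k x y := by
  intro x hx y hy l
  have hW : IsOpen (U ×ˢ {y : Fin n → ℝ | y ≠ 0}) := hU.prod isOpen_ne
  have hmem : (x, y) ∈ U ×ˢ {y : Fin n → ℝ | y ≠ 0} := ⟨hx, hy⟩
  have hFt_at : ContDiffAt ℝ (⊤ : ℕ∞) (fun p : (Fin n → ℝ) × (Fin n → ℝ) => Ft p.1 p.2) (x, y) :=
    hsm'.contDiffAt (hW.mem_nhds hmem)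
  have hF_at : ContDiffAt ℝ (⊤ : ℕ∞) (fun p : (Fin n → ℝ) × (Fin n → ℝ) => F p.1 p.2) (x, y) :=
    hsm.contDiffAt (hW.mem_nhds hmem)
  have hF : DifferentiableAt ℝ (fun y' => F x y') y := by
    have : ContDiffAt ℝ (⊤ : ℕ∞) (fun y' : Fin n → ℝ => F x y') y :=
      hF_at.comp y (ContDiffAt.prodMk contDiffAt_const contDiffAt_id)
    exact this.differentiableAt (by simp)
  have hFtd : DifferentiableAt ℝ (fun y' => Ft x y') y := by
    have : ContDiffAt ℝ (⊤ : ℕ∞) (fun y' : Fin n → ℝ => Ft x y') y :=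
      hFt_at.comp y (ContDiffAt.prodMk contDiffAt_const contDiffAt_id)
    exact this.differentiableAt (by simp)
  have hg : ∀ k : Fin n, DifferentiableAt ℝ (fun y' => pdx Ft k x y') y := by
    intro k
    have hswap : ContDiffAt ℝ (⊤ : ℕ∞)
        (Function.uncurry fun (y' x' : Fin n → ℝ) => Ft x' y') (y, x) := by
      exact hFt_at.comp (y, x) (ContDiffAt.prodMk contDiffAt_snd contDiffAt_fst)
    have hd : ContDiffAt ℝ (⊤ : ℕ∞) (fun y' => fderiv ℝ (fun x' => Ft x' y') x) y := by
      exact hswap.fderiv contDiffAt_const (by simp)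
    have := (hd.clm_apply (contDiffAt_const (c := Pi.single k 1))).differentiableAt (by simp)
    exact this
  -- the two sides as functions of y agree near y, so their derivatives agree
  have heq : fderiv ℝ (fun y' => ∑ k, pdx Ft k x y' * y' k) y
      = fderiv ℝ (fun y' => 2 * F x y' * Ft x y') y := by
    apply Filter.EventuallyEq.fderiv_eq
    have hV : {y : Fin n → ℝ | y ≠ 0} ∈ nhds y := isOpen_ne.mem_nhds hy
    filter_upwards [hV] with y' hy'
    exact hProj x hx y' hy'
  -- left-hand derivative
  have hterm : ∀ k : Fin n, HasFDerivAt (fun y' => pdx Ft k x y' * y' k)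
      (pdx Ft k x y • (ContinuousLinearMap.proj k : (Fin n → ℝ) →L[ℝ] ℝ)
        + y k • fderiv ℝ (fun y' => pdx Ft k x y') y) y := by
    intro k
    exact (hg k).hasFDerivAt.mul (ContinuousLinearMap.proj k : (Fin n → ℝ) →L[ℝ] ℝ).hasFDerivAt
  have hLsum : HasFDerivAt (fun y' => ∑ k, pdx Ft k x y' * y' k)
      (∑ k, (pdx Ft k x y • (ContinuousLinearMap.proj k : (Fin n → ℝ) →L[ℝ] ℝ)
        + y k • fderiv ℝ (fun y' => pdx Ft k x y') y)) y :=
    HasFDerivAt.fun_sum (fun k _ => hterm k)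
  have hL : fderiv ℝ (fun y' => ∑ k, pdx Ft k x y' * y' k) y (Pi.single l 1)
      = (∑ k, pdy (pdx Ft k) l x y * y k) + pdx Ft l x y := by
    rw [hLsum.fderiv]
    rw [ContinuousLinearMap.sum_apply]
    have : ∀ k : Fin n,
        (pdx Ft k x y • (ContinuousLinearMap.proj k : (Fin n → ℝ) →L[ℝ] ℝ)
          + y k • fderiv ℝ (fun y' => pdx Ft k x y') y) (Pi.single l 1)
        = pdy (pdx Ft k) l x y * y k
          + pdx Ft k x y * (if k = l then (1:ℝ) else 0) := by
      intro k
      simp only [ContinuousLinearMap.add_apply, ContinuousLinearMap.smul_apply,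
        ContinuousLinearMap.proj_apply, smul_eq_mul]
      rw [Pi.single_apply]
      have : fderiv ℝ (fun y' => pdx Ft k x y') y (Pi.single l 1)
          = pdy (pdx Ft k) l x y := rfl
      rw [this]; ring
    rw [Finset.sum_congr rfl (fun k _ => this k)]
    rw [Finset.sum_add_distrib]
    congr 1
    simp [Finset.sum_ite_eq', mul_ite]
  -- right-hand derivative
  have hR : fderiv ℝ (fun y' => 2 * F x y' * Ft x y') y (Pi.single l 1)
      = 2 * pdy (fun x' y' => F x' y' * Ft x' y') l x y := by
    have hfun : (fun y' : Fin n → ℝ => 2 * F x y' * Ft x y')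
        = fun y' => 2 * (F x y' * Ft x y') := by
      funext y'; ring
    rw [hfun, fderiv_const_mul (a := fun y' => F x y' * Ft x y') (hF.mul hFtd)]
    have : fderiv ℝ (fun y' => F x y' * Ft x y') y (Pi.single l 1)
        = pdy (fun x' y' => F x' y' * Ft x' y') l x y := rfl
    simp only [ContinuousLinearMap.smul_apply, smul_eq_mul, this]
  have key : (∑ k, pdy (pdx Ft k) l x y * y k) + pdx Ft l x y
      = 2 * pdy (fun x' y' => F x' y' * Ft x' y') l x y := by
    rw [← hL, ← hR, heq]
  rw [hRap x hx y hy l] at key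
  linarith
end

section
/- Let F satisfy the Funk equations F_{xⁱ} = F F_{yⁱ}, let a ∈ ℝⁿ be fixed, and define F̃(x,y) := F(x,y) + Σᵢ F_{xⁱ}(x,y)(xⁱ − aⁱ). Then F̃ satisfies F̃_{xᵏ} = (F F̃)_{yᵏ} for all k. -/
theorem fderiv_slice_fst' {E F' : Type*} [NormedAddCommGroup E] [NormedSpace ℝ E]
    [NormedAddCommGroup F'] [NormedSpace ℝ F']
    {φ : E × E → F'} {x y : E} (h : DifferentiableAt ℝ φ (x, y)) (v : E) :
    fderiv ℝ (fun x' => φ (x', y)) x v = fderiv ℝ φ (x, y) (v, 0) := by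
  have h1 : HasFDerivAt (fun x' => φ (x', y))
      ((fderiv ℝ φ (x, y)).comp (ContinuousLinearMap.inl ℝ E E)) x :=
    h.hasFDerivAt.comp x (hasFDerivAt_prodMk_left x y)
  rw [h1.fderiv]
  simp

theorem fderiv_slice_snd' {E F' : Type*} [NormedAddCommGroup E] [NormedSpace ℝ E]
    [NormedAddCommGroup F'] [NormedSpace ℝ F']
    {φ : E × E → F'} {x y : E} (h : DifferentiableAt ℝ φ (x, y)) (v : E) :
    fderiv ℝ (fun y' => φ (x, y')) y v = fderiv ℝ φ (x, y) (0, v) := by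
  have h1 : HasFDerivAt (fun y' => φ (x, y'))
      ((fderiv ℝ φ (x, y)).comp (ContinuousLinearMap.inr ℝ E E)) y :=
    h.hasFDerivAt.comp y (hasFDerivAt_prodMk_right x y)
  rw [h1.fderiv]
  simp

/-- If `F` solves the Funk equations and `F̃ := F + F_{xⁱ}(xⁱ - aⁱ)`, then
`F̃_{xᵏ} = (F F̃)_{yᵏ}`. -/
theorem funk_shift_solves {n : ℕ} (U : Set (Fin n → ℝ)) (hU : IsOpen U)
    (F : (Fin n → ℝ) → (Fin n → ℝ) → ℝ)
    (hsm : ContDiffOn ℝ (⊤ : ℕ∞) (fun p : (Fin n → ℝ) × (Fin n → ℝ) => F p.1 p.2)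
      (U ×ˢ {y : Fin n → ℝ | y ≠ 0}))
    (hfunk : ∀ x ∈ U, ∀ y : Fin n → ℝ, y ≠ 0 → ∀ i,
      pdx F i x y = F x y * pdy F i x y)
    (a : Fin n → ℝ)
    (Ft : (Fin n → ℝ) → (Fin n → ℝ) → ℝ)
    (hFt : ∀ x y, Ft x y = F x y + ∑ i, pdx F i x y * (x i - a i)) :
    ∀ x ∈ U, ∀ y : Fin n → ℝ, y ≠ 0 → ∀ k : Fin n,
      pdx Ft k x y = pdy (fun x' y' => F x' y' * Ft x' y') k x y := by
  intro x hx y hy k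
  set S : Set ((Fin n → ℝ) × (Fin n → ℝ)) := U ×ˢ {y : Fin n → ℝ | y ≠ 0} with hSdef
  have hS : IsOpen S := hU.prod isOpen_ne
  set G : (Fin n → ℝ) × (Fin n → ℝ) → ℝ := fun p => F p.1 p.2 with hGdef
  set p : (Fin n → ℝ) × (Fin n → ℝ) := (x, y) with hpdef
  have hpS : p ∈ S := ⟨hx, hy⟩
  have hGat : ∀ q ∈ S, ContDiffAt ℝ (⊤ : ℕ∞) G q := fun q hq => (hsm.contDiffAt (hS.mem_nhds hq))
  have hGd : ∀ q ∈ S, DifferentiableAt ℝ G q := fun q hq => (hGat q hq).differentiableAt (by simp)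
  set B := fderiv ℝ G with hBdef
  set C := fderiv ℝ B p with hCdef
  have hBc : ContDiffAt ℝ 1 B p := (hGat p hpS).fderiv_right (WithTop.coe_le_coe.mpr (le_top (a := (2 : ℕ∞))))
  have hBd : DifferentiableAt ℝ B p := hBc.differentiableAt one_ne_zero
  -- vectors
  set ex : Fin n → (Fin n → ℝ) × (Fin n → ℝ) := fun i => (Pi.single i 1, 0) with hexdef
  set ey : Fin n → (Fin n → ℝ) × (Fin n → ℝ) := fun i => (0, Pi.single i 1) with heydef
  -- slice identifications
  have hpdx : ∀ q ∈ S, ∀ i, pdx F i q.1 q.2 = B q (ex i) := by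
    rintro ⟨x₀, y₀⟩ hq i
    exact fderiv_slice_fst' (hGd _ hq) (Pi.single i 1)
  have hpdy : ∀ q ∈ S, ∀ i, pdy F i q.1 q.2 = B q (ey i) := by
    rintro ⟨x₀, y₀⟩ hq i
    exact fderiv_slice_snd' (hGd _ hq) (Pi.single i 1)
  -- Funk equation in terms of G, B
  have hfG : ∀ q ∈ S, ∀ i, B q (ex i) = G q * B q (ey i) := by
    rintro ⟨x₀, y₀⟩ hq i
    rw [← hpdx _ hq i, ← hpdy _ hq i]
    exact hfunk x₀ hq.1 y₀ hq.2 i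
  -- derivative of q ↦ B q v
  have hBv : ∀ v : (Fin n → ℝ) × (Fin n → ℝ), HasFDerivAt (fun q => B q v)
      ((ContinuousLinearMap.apply ℝ ℝ v).comp C) p :=
    fun v => (ContinuousLinearMap.apply ℝ ℝ v).hasFDerivAt.comp p hBd.hasFDerivAt
  -- symmetry of second derivative
  have hsymm : ∀ v w : (Fin n → ℝ) × (Fin n → ℝ), C v w = C w v := by
    intro v w
    exact ((hGat p hpS).isSymmSndFDerivAt (by rw [minSmoothness_of_isRCLikeNormedField]; exact WithTop.coe_le_coe.mpr (le_top (a := (2 : ℕ∞))))).eq v w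
  -- differentiated Funk equations
  have hFunkD : ∀ i, ∀ w : (Fin n → ℝ) × (Fin n → ℝ), C w (ex i) = B p w * B p (ey i) + G p * C w (ey i) := by
    intro i w
    have heq : (fun q => B q (ex i)) =ᶠ[nhds p] fun q => G q * B q (ey i) :=
      Filter.eventuallyEq_of_mem (hS.mem_nhds hpS) (fun q hq => hfG q hq i)
    have h1 : HasFDerivAt (fun q => G q * B q (ey i))
        (G p • ((ContinuousLinearMap.apply ℝ ℝ (ey i)).comp C) + (B p (ey i)) • fderiv ℝ G p) p :=
      (hGd p hpS).hasFDerivAt.mul (hBv (ey i))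
    have h2 := (hBv (ex i)).fderiv
    rw [heq.fderiv_eq, h1.fderiv] at h2
    have h3 := congrArg (fun L => L w) h2
    rw [← hBdef] at h3
    simp only [ContinuousLinearMap.add_apply, ContinuousLinearMap.coe_comp',
      Function.comp_apply, ContinuousLinearMap.apply_apply,
      ContinuousLinearMap.smul_apply, smul_eq_mul] at h3
    linarith [h3]
  -- the shifted function as a function on the product
  set Φ : (Fin n → ℝ) × (Fin n → ℝ) → ℝ := fun q => G q + ∑ i, B q (ex i) * (q.1 i - a i) with hΦdef
  have hΦeq : ∀ q ∈ S, Ft q.1 q.2 = Φ q := by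
    intro q hq
    rw [hFt, hΦdef]
    congr 1
    exact Finset.sum_congr rfl fun i _ => by rw [hpdx q hq i]
  -- derivative of Φ
  have hproj : ∀ i : Fin n, HasFDerivAt (fun q : (Fin n → ℝ) × (Fin n → ℝ) => q.1 i - a i)
      ((ContinuousLinearMap.proj i).comp (ContinuousLinearMap.fst ℝ (Fin n → ℝ) (Fin n → ℝ))) p :=
    fun i => (((ContinuousLinearMap.proj i).comp
      (ContinuousLinearMap.fst ℝ (Fin n → ℝ) (Fin n → ℝ))).hasFDerivAt (x := p)).sub_const (a i)
  have hterm : ∀ i : Fin n, HasFDerivAt (fun q => B q (ex i) * (q.1 i - a i))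
      ((B p (ex i)) • ((ContinuousLinearMap.proj i).comp (ContinuousLinearMap.fst ℝ (Fin n → ℝ) (Fin n → ℝ)))
        + (p.1 i - a i) • ((ContinuousLinearMap.apply ℝ ℝ (ex i)).comp C)) p :=
    fun i => (hBv (ex i)).mul (hproj i)
  have hΦ : HasFDerivAt Φ (fderiv ℝ G p + ∑ i,
      ((B p (ex i)) • ((ContinuousLinearMap.proj i).comp (ContinuousLinearMap.fst ℝ (Fin n → ℝ) (Fin n → ℝ)))
        + (p.1 i - a i) • ((ContinuousLinearMap.apply ℝ ℝ (ex i)).comp C))) p :=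
    (hGd p hpS).hasFDerivAt.add (HasFDerivAt.fun_sum fun i _ => hterm i)
  -- LHS computation
  have hLHS : pdx Ft k x y = B p (ex k) +
      ∑ i, (B p (ex i) * ((Pi.single k 1 : Fin n → ℝ) i) + (x i - a i) * C (ex k) (ex i)) := by
    have heq : (fun x' => Ft x' y) =ᶠ[nhds x] fun x' => Φ (x', y) := by
      filter_upwards [hU.mem_nhds hx] with x' hx'
      exact hΦeq (x', y) ⟨hx', hy⟩
    have : pdx Ft k x y = fderiv ℝ (fun x' => Φ (x', y)) x (Pi.single k 1) := by
      rw [pdx, heq.fderiv_eq]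
    rw [this, fderiv_slice_fst' (hΦ.differentiableAt) (Pi.single k 1)]
    rw [hΦ.fderiv]
    simp [ex, mul_comm]
    rfl
  -- RHS computation
  have hΨ : HasFDerivAt (fun q => G q * Φ q)
      (G p • (fderiv ℝ G p + ∑ i,
      ((B p (ex i)) • ((ContinuousLinearMap.proj i).comp (ContinuousLinearMap.fst ℝ (Fin n → ℝ) (Fin n → ℝ)))
        + (p.1 i - a i) • ((ContinuousLinearMap.apply ℝ ℝ (ex i)).comp C)))
        + Φ p • fderiv ℝ G p) p :=
    (hGd p hpS).hasFDerivAt.mul hΦ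
  have hRHS : pdy (fun x' y' => F x' y' * Ft x' y') k x y =
      G p * (B p (ey k) + ∑ i, (x i - a i) * C (ey k) (ex i)) + Φ p * B p (ey k) := by
    have heq : (fun y' => F x y' * Ft x y') =ᶠ[nhds y] fun y' => G (x, y') * Φ (x, y') := by
      filter_upwards [isOpen_ne.mem_nhds hy] with y' hy'
      have := hΦeq (x, y') ⟨hx, hy'⟩
      simp only [G]
      rw [← this]
    have : pdy (fun x' y' => F x' y' * Ft x' y') k x y
        = fderiv ℝ (fun y' => G (x, y') * Φ (x, y')) y (Pi.single k 1) := by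
      rw [pdy, heq.fderiv_eq]
    rw [this, fderiv_slice_snd' hΨ.differentiableAt (Pi.single k 1)]
    rw [hΨ.fderiv]
    simp only [← hBdef]
    simp [ey, mul_comm, mul_add]
    exact Or.inl rfl
  -- final algebra
  rw [hLHS, hRHS]
  have hBy : ∀ i, B p (ex i) = G p * B p (ey i) := hfG p hpS
  set g : ℝ := G p with hg
  set b : Fin n → ℝ := fun i => B p (ey i) with hb
  set c : Fin n → ℝ := fun i => C (ey i) (ey k) with hc
  have hCxx : ∀ i, C (ex k) (ex i) = g * b k * b i + g * (b i * b k + g * c i) := by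
    intro i
    rw [hFunkD i (ex k), hBy k, hsymm (ex k) (ey i), hFunkD k (ey i)]
  have hCyx : ∀ i, C (ey k) (ex i) = b k * b i + g * c i := by
    intro i
    rw [hFunkD i (ey k), hsymm (ey k) (ey i)]
  have hΦp : Φ p = g + ∑ i, g * b i * (x i - a i) := by
    rw [hΦdef]
    simp only
    congr 1
    exact Finset.sum_congr rfl fun i _ => by rw [hBy i]
  have hsingle : ∑ i, B p (ex i) * ((Pi.single k 1 : Fin n → ℝ) i) = g * b k := by
    rw [Finset.sum_eq_single k]
    · rw [hBy k]; simp
      exact Or.inl rfl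
    · intro i _ hik
      simp [Pi.single_apply, (Ne.symm hik : k ≠ i)]
    · simp
  rw [Finset.sum_add_distrib, hsingle, hΦp, hBy k]
  set s1 : ℝ := ∑ i, (x i - a i) * b i with hs1
  set s2 : ℝ := ∑ i, (x i - a i) * c i with hs2
  have e1 : (∑ i, (x i - a i) * C (ex k) (ex i)) = 2 * g * b k * s1 + g ^ 2 * s2 := by
    rw [hs1, hs2, Finset.mul_sum, Finset.mul_sum, ← Finset.sum_add_distrib]
    exact Finset.sum_congr rfl fun i _ => by rw [hCxx i]; ring
  have e2 : (∑ i, (x i - a i) * C (ey k) (ex i)) = b k * s1 + g * s2 := by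
    rw [hs1, hs2, Finset.mul_sum, Finset.mul_sum, ← Finset.sum_add_distrib]
    exact Finset.sum_congr rfl fun i _ => by rw [hCyx i]; ring
  have e3 : (∑ i, g * b i * (x i - a i)) = g * s1 := by
    rw [hs1, Finset.mul_sum]
    exact Finset.sum_congr rfl fun i _ => by ring
  rw [e1, e2, e3]
  ring
end

section
/- For the Funk metric F on the unit ball 𝔹ⁿ, the function F̃(x,y) := F(x,y) + Σᵢ F_{xⁱ}(x,y)·xⁱ equals (√(|y|² − (|x|²|y|² − ⟨x,y⟩²)) + ⟨x,y⟩)² / ((1−|x|²)² √(|y|² − (|x|²|y|² − ⟨x,y⟩²))), for |x| < 1 and y with |y|² − (|x|²|y|² − ⟨x,y⟩²) > 0. -/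
open scoped RealInnerProductSpace

/-!
`∑ i, F_{xⁱ}(x, y) xⁱ` is the derivative of `F` at `x` in the direction `x`, i.e. the derivative
of `s ↦ F(s x, y)` at `s = 1`. Along this ray `F` depends on `s` only through `s² ‖x‖²` and
`s ⟪x, y⟫`, so this is a one-variable quotient-rule computation, and the closed form follows from
`√A ² = A` for the radicand `A = ‖y‖² - (‖x‖² ‖y‖² - ⟪x, y⟫²)`.
-/

/-- The Funk metric of the unit ball in ℝⁿ. -/
noncomputable def funkF {n : ℕ} (x y : EuclideanSpace ℝ (Fin n)) : ℝ :=
  (Real.sqrt (‖y‖ ^ 2 - (‖x‖ ^ 2 * ‖y‖ ^ 2 - ⟪x, y⟫ ^ 2)) + ⟪x, y⟫) / (1 - ‖x‖ ^ 2)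

theorem EuclideanSpace.sum_apply_single_mul {𝕜 ι : Type*} [RCLike 𝕜] [Fintype ι]
    [DecidableEq ι] (L : EuclideanSpace 𝕜 ι →L[𝕜] 𝕜) (x : EuclideanSpace 𝕜 ι) :
    ∑ i, L (EuclideanSpace.single i 1) * x i = L x := by
  conv_rhs => rw [← (EuclideanSpace.basisFun ι 𝕜).sum_repr x]
  simp [map_sum, mul_comm]

theorem HasFDerivAt.hasDerivAt_smul_one {E F : Type*} [NormedAddCommGroup E] [NormedSpace ℝ E]
    [NormedAddCommGroup F] [NormedSpace ℝ F] {f : E → F} {L : E →L[ℝ] F} {x : E}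
    (h : HasFDerivAt f L x) : HasDerivAt (fun s : ℝ => f (s • x)) (L x) 1 := by
  rw [← one_smul ℝ x] at h
  simpa [Function.comp_def] using h.comp_hasDerivAt (1 : ℝ) ((hasDerivAt_id (1 : ℝ)).smul_const x)

theorem differentiableAt_funkF {n : ℕ} {x : EuclideanSpace ℝ (Fin n)}
    (y : EuclideanSpace ℝ (Fin n)) (hA : ‖y‖ ^ 2 - (‖x‖ ^ 2 * ‖y‖ ^ 2 - ⟪x, y⟫ ^ 2) ≠ 0)
    (hC : 1 - ‖x‖ ^ 2 ≠ 0) :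
    DifferentiableAt ℝ (fun x' => funkF x' y) x := by
  have hn : DifferentiableAt ℝ (fun x' : EuclideanSpace ℝ (Fin n) => ‖x'‖ ^ 2) x :=
    differentiableAt_id.norm_sq ℝ
  have hb : DifferentiableAt ℝ (fun x' : EuclideanSpace ℝ (Fin n) => ⟪x', y⟫) x :=
    differentiableAt_id.inner ℝ (differentiableAt_const y)
  have hA' := ((hn.mul_const (‖y‖ ^ 2)).sub (hb.pow 2)).const_sub (‖y‖ ^ 2)
  simp only [funkF, div_eq_mul_inv]
  exact ((hA'.sqrt hA).add hb).mul ((hn.const_sub 1).inv hC)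

theorem funkF_smul {n : ℕ} (s : ℝ) (x y : EuclideanSpace ℝ (Fin n)) :
    funkF (s • x) y
      = (√(‖y‖ ^ 2 - s ^ 2 * (‖x‖ ^ 2 * ‖y‖ ^ 2 - ⟪x, y⟫ ^ 2)) + s * ⟪x, y⟫)
        / (1 - s ^ 2 * ‖x‖ ^ 2) := by
  simp only [funkF, norm_smul, real_inner_smul_left, Real.norm_eq_abs, mul_pow, sq_abs]
  ring_nf

-- In the next two lemmas `a`, `b`, `c` stand for `‖x‖²`, `⟪x, y⟫`, `‖y‖²`.

theorem hasDerivAt_funk_ray {a b c : ℝ} (hA : c - (a * c - b ^ 2) ≠ 0) (hC : 1 - a ≠ 0) :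
    HasDerivAt (fun s : ℝ => (√(c - s ^ 2 * (a * c - b ^ 2)) + s * b) / (1 - s ^ 2 * a))
      (((b - (a * c - b ^ 2) / √(c - (a * c - b ^ 2))) * (1 - a)
        + 2 * a * (√(c - (a * c - b ^ 2)) + b)) / (1 - a) ^ 2) 1 := by
  have hsq := hasDerivAt_pow 2 (1 : ℝ)
  have hnum := ((hsq.mul_const (a * c - b ^ 2)).const_sub c).sqrt (by simpa using hA)
    |>.add ((hasDerivAt_id' (1 : ℝ)).mul_const b)
  refine (hnum.div ((hsq.mul_const a).const_sub 1) (by simpa using hC)).congr_deriv ?_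
  norm_num
  ring

theorem funk_ray_add_deriv {a b c : ℝ} (hA : 0 < c - (a * c - b ^ 2)) (hC : 1 - a ≠ 0) :
    (√(c - (a * c - b ^ 2)) + b) / (1 - a)
      + ((b - (a * c - b ^ 2) / √(c - (a * c - b ^ 2))) * (1 - a)
        + 2 * a * (√(c - (a * c - b ^ 2)) + b)) / (1 - a) ^ 2
    = (√(c - (a * c - b ^ 2)) + b) ^ 2 / ((1 - a) ^ 2 * √(c - (a * c - b ^ 2))) := by
  have hS2 := Real.sq_sqrt hA.le
  set S := √(c - (a * c - b ^ 2))
  have hS : S ≠ 0 := (Real.sqrt_pos.mpr hA).ne'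
  field_simp
  linear_combination a * hS2

/-- For the Funk metric on the unit ball, `F̃ = F + F_{xⁱ}·xⁱ` has the stated closed form. -/
theorem funk_tilde_formula {n : ℕ} (x y : EuclideanSpace ℝ (Fin n)) (hx : ‖x‖ < 1)
    (hA : 0 < ‖y‖ ^ 2 - (‖x‖ ^ 2 * ‖y‖ ^ 2 - ⟪x, y⟫ ^ 2)) :
    funkF x y
      + ∑ i, fderiv ℝ (fun x' => funkF x' y) x (EuclideanSpace.single i 1) * x i
    = (Real.sqrt (‖y‖ ^ 2 - (‖x‖ ^ 2 * ‖y‖ ^ 2 - ⟪x, y⟫ ^ 2)) + ⟪x, y⟫) ^ 2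
        / ((1 - ‖x‖ ^ 2) ^ 2
            * Real.sqrt (‖y‖ ^ 2 - (‖x‖ ^ 2 * ‖y‖ ^ 2 - ⟪x, y⟫ ^ 2))) := by
  have hC : 1 - ‖x‖ ^ 2 ≠ 0 := (sub_pos.2 (pow_lt_one₀ (norm_nonneg x) hx two_ne_zero)).ne'
  have hradial := (differentiableAt_funkF y hA.ne' hC).hasFDerivAt.hasDerivAt_smul_one
  have hray := hasDerivAt_funk_ray hA.ne' hC
  rw [← funext fun s => funkF_smul s x y] at hray
  rw [EuclideanSpace.sum_apply_single_mul, hradial.unique hray, funkF]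
  exact funk_ray_add_deriv hA hC
end
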